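/- arXiv:1805.04219 — 14 statements merged into one kernel-verified Lean document; each statement's English description precedes it below -/
import Mathlib

section
/- Let Λ be a finite lattice with least element ⊥ and greatest element ⊤, and let X be a set. (a) Suppose Eq : Λ → (X → X → Prop) assigns to each λ an equivalence relation on X such that for all λ, μ, x, y: Eq(λ ⊓ μ) x y ↔ (Eq(λ) x y ∧ Eq(μ) x y), Eq(⊥) is the equality relation, and Eq(⊤) is the always-true relation. Define d(x,y) to be the meet of the finite set {λ ∈ Λ : Eq(λ) x y}. Then d is a Λ-ultrametric on X — that is, d(x,y) = ⊥ if and only if x = y, d(x,y) = d(y,x), and d(x,z) ≤ d(x,y) ⊔ d(y,z) — and moreover Eq(λ) x y ↔ d(x,y) ≤ λ for all λ, x, y. (b) Conversely, if d is a Λ-ultrametric on X and Eq(λ) x y is defined to hold iff d(x,y) ≤ λ, then each Eq(λ) is an equivalence relation, Eq(λ ⊓ μ) x y ↔ (Eq(λ) x y ∧ Eq(μ) x y), Eq(⊥) is equality, and Eq(⊤) is the always-true relation. -/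
/-!
In a finite lattice the set `{l | E l x y}` is finite, nonempty (it contains `⊤`) and closed
under `⊓`, so its infimum `d x y` belongs to it; as `E` turns meets into conjunctions the set is
also upward closed, hence it is exactly the principal filter of `d x y`: `E l x y ↔ d x y ≤ l`.
Through this dictionary reflexivity, symmetry and transitivity of the relations `E l` become the
ultrametric axioms, and conversely.
-/

theorem InfClosed.isGLB_mem {α : Type*} [SemilatticeInf α] {s : Set α} {a : α}
    (hs : InfClosed s) (hfin : s.Finite) (hne : s.Nonempty) (ha : IsGLB s a) : a ∈ s := by
  have hne' : hfin.toFinset.Nonempty := hfin.toFinset_nonempty.mpr hne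
  have hleast : IsLeast s (hfin.toFinset.inf' hne' id) :=
    ⟨hs.finsetInf'_mem hne' fun _ hi => hfin.mem_toFinset.mp hi,
     fun _ hc => Finset.inf'_le id (hfin.mem_toFinset.mpr hc)⟩
  exact ha.unique hleast.isGLB ▸ hleast.1

theorem le_iff_of_isGLB_setOf {Λ : Type*} [Lattice Λ] [OrderTop Λ] [Finite Λ] {r : Λ → Prop}
    {a : Λ} (hinf : ∀ l m, r (l ⊓ m) ↔ r l ∧ r m) (htop : r ⊤) (ha : IsGLB {l | r l} a)
    (l : Λ) : r l ↔ a ≤ l := by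
  have hra : r a :=
    InfClosed.isGLB_mem (fun _ hl _ hm => (hinf _ _).2 ⟨hl, hm⟩) (Set.toFinite _) ⟨⊤, htop⟩ ha
  refine ⟨fun hl => ha.1 hl, fun hle => ((hinf a l).1 ?_).2⟩
  rwa [inf_eq_left.mpr hle]

namespace Ultrametric

variable {Λ X : Type*} [Lattice Λ] {E : Λ → X → X → Prop} {d : X → X → Λ}

theorem dist_eq_bot_iff [OrderBot Λ] (hE : ∀ l x y, E l x y ↔ d x y ≤ l)
    (hbot : ∀ x y, E ⊥ x y ↔ x = y) (x y : X) : d x y = ⊥ ↔ x = y := by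
  rw [← le_bot_iff, ← hE, hbot]

theorem dist_comm (hE : ∀ l x y, E l x y ↔ d x y ≤ l) (hsymm : ∀ l x y, E l x y → E l y x)
    (x y : X) : d x y = d y x :=
  le_antisymm ((hE _ x y).1 (hsymm _ _ _ ((hE _ y x).2 le_rfl)))
    ((hE _ y x).1 (hsymm _ _ _ ((hE _ x y).2 le_rfl)))

theorem dist_le_sup (hE : ∀ l x y, E l x y ↔ d x y ≤ l)
    (htrans : ∀ l x y z, E l x y → E l y z → E l x z) (x y z : X) : d x z ≤ d x y ⊔ d y z :=
  (hE _ x z).1 (htrans _ _ _ _ ((hE _ x y).2 le_sup_left) ((hE _ y z).2 le_sup_right))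

theorem equivalence_dist_le [OrderBot Λ] (hself : ∀ x, d x x = ⊥) (hcomm : ∀ x y, d x y = d y x)
    (htri : ∀ x y z, d x z ≤ d x y ⊔ d y z) (l : Λ) : Equivalence fun x y => d x y ≤ l where
  refl x := hself x ▸ bot_le
  symm {x y} h := hcomm x y ▸ h
  trans {x y z} hxy hyz := (htri x y z).trans (sup_le hxy hyz)

end Ultrametric

/-- correspondence between meet-preserving Λ-indexed families of
equivalence relations and Λ-ultrametrics, for a finite bounded lattice Λ. -/
theorem stmt_0 {Λ X : Type*} [Lattice Λ] [BoundedOrder Λ] [Fintype Λ] :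
    -- (a)
    (∀ (E : Λ → X → X → Prop) (d : X → X → Λ),
      (∀ l, Equivalence (E l)) →
      (∀ l m x y, E (l ⊓ m) x y ↔ E l x y ∧ E m x y) →
      (∀ x y, E ⊥ x y ↔ x = y) →
      (∀ x y, E ⊤ x y) →
      (∀ x y, IsGLB {l : Λ | E l x y} (d x y)) →
      ((∀ x y, d x y = ⊥ ↔ x = y) ∧
       (∀ x y, d x y = d y x) ∧
       (∀ x y z, d x z ≤ d x y ⊔ d y z) ∧
       (∀ l x y, E l x y ↔ d x y ≤ l))) ∧
    -- (b)
    (∀ d : X → X → Λ,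
      (∀ x y, d x y = ⊥ ↔ x = y) →
      (∀ x y, d x y = d y x) →
      (∀ x y z, d x z ≤ d x y ⊔ d y z) →
      ((∀ l, Equivalence (fun x y => d x y ≤ l)) ∧
       (∀ l m x y, d x y ≤ l ⊓ m ↔ d x y ≤ l ∧ d x y ≤ m) ∧
       (∀ x y, d x y ≤ (⊥ : Λ) ↔ x = y) ∧
       (∀ x y, d x y ≤ (⊤ : Λ)))) := by
  refine ⟨fun E d hequiv hinf hbot htop hglb => ?_, fun d hbot hcomm htri => ?_⟩
  · have hE : ∀ l x y, E l x y ↔ d x y ≤ l := fun l x y =>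
      le_iff_of_isGLB_setOf (hinf · · x y) (htop x y) (hglb x y) l
    exact ⟨Ultrametric.dist_eq_bot_iff hE hbot,
      Ultrametric.dist_comm hE fun l _ _ => (hequiv l).symm,
      Ultrametric.dist_le_sup hE fun l _ _ _ => (hequiv l).trans, hE⟩
  · exact ⟨Ultrametric.equivalence_dist_le (fun x => (hbot x x).2 rfl) hcomm htri,
      fun _ _ _ _ => le_inf_iff, fun x y => le_bot_iff.trans (hbot x y), fun _ _ => le_top⟩
end

section
/- Let Λ be a finite distributive lattice. Then the class of all finite Λ-ultrametric spaces has the amalgamation property: for all finite Λ-ultrametric spaces (A,d_A), (B₁,d₁), (B₂,d₂) and isometries f₁ : A → B₁ and f₂ : A → B₂, there exist a finite Λ-ultrametric space (C,d_C) and isometries g₁ : B₁ → C and g₂ : B₂ → C with g₁ ∘ f₁ = g₂ ∘ f₂. -/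
/-!
Glue `B₁` and `B₂` along `A` on the disjoint union `B₁ ⊕ B₂`: the distance between `x ∈ B₁`
and `y ∈ B₂` is the largest value allowed by the triangle inequality through `A`, namely
`⨅ a, d₁ x (f₁ a) ⊔ d₂ (f₂ a) y` (`⊤` if `A` is empty, which is why `Λ` is finite).
Distributivity lets `⊔` pass through this meet, which is what makes the triangle inequalities
across the two pieces hold. The result is only a pseudo-ultrametric (e.g. `f₁ a` and `f₂ a`
are at distance `⊥`), so the amalgam is its quotient by the relation "at distance `⊥`".
-/

/-- A `Λ`-ultrametric on `X`: `d x y = ⊥` iff `x = y`, symmetry, and the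
triangle inequality with join in place of addition. -/
def IsLambdaUltrametric {Λ X : Type*} [Lattice Λ] [OrderBot Λ]
    (d : X → X → Λ) : Prop :=
  (∀ x y, d x y = ⊥ ↔ x = y) ∧ (∀ x y, d x y = d y x) ∧
  (∀ x y z, d x z ≤ d x y ⊔ d y z)

structure IsLambdaPseudoUltrametric {Λ X : Type*} [Lattice Λ] [OrderBot Λ]
    (d : X → X → Λ) : Prop where
  dist_self : ∀ x, d x x = ⊥
  symm : ∀ x y, d x y = d y x
  triangle : ∀ x y z, d x z ≤ d x y ⊔ d y z

section Lattice

variable {Λ X Y : Type*} [Lattice Λ] [OrderBot Λ]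

theorem IsLambdaUltrametric.isLambdaPseudoUltrametric {d : X → X → Λ}
    (h : IsLambdaUltrametric d) : IsLambdaPseudoUltrametric d :=
  ⟨fun x => (h.1 x x).2 rfl, h.2.1, h.2.2⟩

namespace IsLambdaPseudoUltrametric

variable {d : X → X → Λ}

def setoid (h : IsLambdaPseudoUltrametric d) : Setoid X where
  r x y := d x y = ⊥
  iseqv :=
    { refl := h.dist_self
      symm := fun hxy => by rwa [h.symm]
      trans := fun hxy hyz =>
        le_bot_iff.1 <| (h.triangle _ _ _).trans_eq <| by rw [hxy, hyz, sup_idem] }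

theorem dist_le_of_dist_eq_bot (h : IsLambdaPseudoUltrametric d) {x x' y y' : X}
    (hx : d x x' = ⊥) (hy : d y' y = ⊥) : d x y ≤ d x' y' :=
  calc d x y ≤ d x x' ⊔ (d x' y' ⊔ d y' y) :=
        (h.triangle x x' y).trans (sup_le_sup_left (h.triangle x' y' y) _)
    _ = d x' y' := by rw [hx, hy, bot_sup_eq, sup_bot_eq]

theorem dist_congr (h : IsLambdaPseudoUltrametric d) {x x' y y' : X}
    (hx : d x x' = ⊥) (hy : d y y' = ⊥) : d x y = d x' y' :=
  le_antisymm (h.dist_le_of_dist_eq_bot hx (by rwa [h.symm]))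
    (h.dist_le_of_dist_eq_bot (by rwa [h.symm]) hy)

def quotientDist (h : IsLambdaPseudoUltrametric d) :
    Quotient h.setoid → Quotient h.setoid → Λ :=
  Quotient.lift₂ d fun _ _ _ _ => h.dist_congr

theorem isLambdaUltrametric_quotientDist (h : IsLambdaPseudoUltrametric d) :
    IsLambdaUltrametric h.quotientDist := by
  refine ⟨?_, ?_, ?_⟩
  · rintro ⟨x⟩ ⟨y⟩
    exact ⟨fun hxy => Quotient.sound hxy, fun hxy => Quotient.exact hxy⟩
  · rintro ⟨x⟩ ⟨y⟩
    exact h.symm x y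
  · rintro ⟨x⟩ ⟨y⟩ ⟨z⟩
    exact h.triangle x y z

end IsLambdaPseudoUltrametric

def glueDist (d₁ : X → X → Λ) (d₂ : Y → Y → Λ) (e : X → Y → Λ) : X ⊕ Y → X ⊕ Y → Λ
  | .inl x, .inl x' => d₁ x x'
  | .inr y, .inr y' => d₂ y y'
  | .inl x, .inr y => e x y
  | .inr y, .inl x => e x y

theorem isLambdaPseudoUltrametric_glueDist {d₁ : X → X → Λ} {d₂ : Y → Y → Λ}
    {e : X → Y → Λ} (h₁ : IsLambdaPseudoUltrametric d₁) (h₂ : IsLambdaPseudoUltrametric d₂)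
    (hl : ∀ x x' y, e x y ≤ d₁ x x' ⊔ e x' y) (hr : ∀ x y y', e x y ≤ e x y' ⊔ d₂ y' y)
    (hm₁ : ∀ x x' y, d₁ x x' ≤ e x y ⊔ e x' y) (hm₂ : ∀ x y y', d₂ y y' ≤ e x y ⊔ e x y') :
    IsLambdaPseudoUltrametric (glueDist d₁ d₂ e) where
  dist_self := by
    rintro (x | y)
    exacts [h₁.dist_self x, h₂.dist_self y]
  symm := by
    rintro (x | y) (x' | y')
    exacts [h₁.symm x x', rfl, rfl, h₂.symm y y']
  triangle := by
    rintro (x | x) (y | y) (z | z)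
    · exact h₁.triangle x y z
    · exact hl x y z
    · exact hm₁ x z y
    · exact hr x z y
    · show e z x ≤ e y x ⊔ d₁ y z
      exact (hl z y x).trans_eq (by rw [sup_comm, h₁.symm])
    · exact hm₂ y x z
    · show e z x ≤ d₂ x y ⊔ e z y
      exact (hr z x y).trans_eq (by rw [sup_comm, h₂.symm])
    · exact h₂.triangle x y z

end Lattice

section DistribLattice

variable {Λ A B₁ B₂ : Type*} [DistribLattice Λ] [OrderTop Λ] [Fintype A]
  {d₁ : B₁ → B₁ → Λ} {d₂ : B₂ → B₂ → Λ} {f₁ : A → B₁} {f₂ : A → B₂}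

variable (d₁ d₂ f₁ f₂) in
def crossDist (x : B₁) (y : B₂) : Λ :=
  Finset.univ.inf fun a => d₁ x (f₁ a) ⊔ d₂ (f₂ a) y

theorem crossDist_le (x : B₁) (y : B₂) (a : A) :
    crossDist d₁ d₂ f₁ f₂ x y ≤ d₁ x (f₁ a) ⊔ d₂ (f₂ a) y :=
  Finset.inf_le (Finset.mem_univ a)

variable [OrderBot Λ]

theorem crossDist_comm (h₁ : IsLambdaPseudoUltrametric d₁) (h₂ : IsLambdaPseudoUltrametric d₂)
    (x : B₁) (y : B₂) : crossDist d₂ d₁ f₂ f₁ y x = crossDist d₁ d₂ f₁ f₂ x y := by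
  simp only [crossDist, h₁.symm x, h₂.symm y, sup_comm]

theorem crossDist_eq_bot (h₁ : IsLambdaPseudoUltrametric d₁) (h₂ : IsLambdaPseudoUltrametric d₂)
    (a : A) : crossDist d₁ d₂ f₁ f₂ (f₁ a) (f₂ a) = ⊥ :=
  le_bot_iff.1 <| (crossDist_le _ _ a).trans_eq <| by rw [h₁.dist_self, h₂.dist_self, sup_bot_eq]

theorem crossDist_le_dist_sup_crossDist (h₁ : IsLambdaPseudoUltrametric d₁)
    (x x' : B₁) (y : B₂) :
    crossDist d₁ d₂ f₁ f₂ x y ≤ d₁ x x' ⊔ crossDist d₁ d₂ f₁ f₂ x' y := by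
  rw [crossDist, crossDist, Finset.inf_sup_distrib_left]
  refine Finset.le_inf fun a _ => (crossDist_le x y a).trans ?_
  calc d₁ x (f₁ a) ⊔ d₂ (f₂ a) y ≤ (d₁ x x' ⊔ d₁ x' (f₁ a)) ⊔ d₂ (f₂ a) y :=
        sup_le_sup_right (h₁.triangle _ _ _) _
    _ = d₁ x x' ⊔ (d₁ x' (f₁ a) ⊔ d₂ (f₂ a) y) := sup_assoc ..

theorem dist_le_crossDist_sup_crossDist (h₁ : IsLambdaPseudoUltrametric d₁)
    (h₂ : IsLambdaPseudoUltrametric d₂) (hf : ∀ a b, d₁ (f₁ a) (f₁ b) = d₂ (f₂ a) (f₂ b))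
    (x x' : B₁) (y : B₂) :
    d₁ x x' ≤ crossDist d₁ d₂ f₁ f₂ x y ⊔ crossDist d₁ d₂ f₁ f₂ x' y := by
  rw [crossDist, crossDist, Finset.inf_sup_distrib_right]
  refine Finset.le_inf fun a _ => ?_
  rw [Finset.inf_sup_distrib_left]
  refine Finset.le_inf fun b _ => ?_
  have through_y : d₁ (f₁ a) (f₁ b) ≤ d₂ (f₂ a) y ⊔ d₂ (f₂ b) y := by
    rw [hf, h₂.symm (f₂ b) y]
    exact h₂.triangle _ _ _
  calc d₁ x x' ≤ d₁ x (f₁ a) ⊔ (d₁ (f₁ a) (f₁ b) ⊔ d₁ (f₁ b) x') :=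
        (h₁.triangle _ _ _).trans (sup_le_sup_left (h₁.triangle _ _ _) _)
    _ ≤ d₁ x (f₁ a) ⊔ ((d₂ (f₂ a) y ⊔ d₂ (f₂ b) y) ⊔ d₁ x' (f₁ b)) := by
        rw [h₁.symm _ x']
        exact sup_le_sup_left (sup_le_sup_right through_y _) _
    _ = (d₁ x (f₁ a) ⊔ d₂ (f₂ a) y) ⊔ (d₁ x' (f₁ b) ⊔ d₂ (f₂ b) y) := by ac_rfl

theorem isLambdaPseudoUltrametric_glueDist_crossDist (h₁ : IsLambdaPseudoUltrametric d₁)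
    (h₂ : IsLambdaPseudoUltrametric d₂) (hf : ∀ a b, d₁ (f₁ a) (f₁ b) = d₂ (f₂ a) (f₂ b)) :
    IsLambdaPseudoUltrametric (glueDist d₁ d₂ (crossDist d₁ d₂ f₁ f₂)) := by
  refine isLambdaPseudoUltrametric_glueDist h₁ h₂ (crossDist_le_dist_sup_crossDist h₁)
    (fun x y y' => ?_) (dist_le_crossDist_sup_crossDist h₁ h₂ hf) (fun x y y' => ?_)
  · simpa only [crossDist_comm h₁ h₂, sup_comm, h₂.symm y']
      using crossDist_le_dist_sup_crossDist h₂ (d₂ := d₁) (f₁ := f₂) (f₂ := f₁) y y' x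
  · simpa only [crossDist_comm h₁ h₂]
      using dist_le_crossDist_sup_crossDist h₂ h₁ (fun a b => (hf a b).symm) y y' x

end DistribLattice

theorem stmt_1_general {Λ : Type} [DistribLattice Λ] [OrderBot Λ] [Fintype Λ]
    (A B₁ B₂ : Type) [Fintype A] [Fintype B₁] [Fintype B₂]
    (dA : A → A → Λ) (d₁ : B₁ → B₁ → Λ) (d₂ : B₂ → B₂ → Λ)
    (h₁ : IsLambdaUltrametric d₁)
    (h₂ : IsLambdaUltrametric d₂)
    (f₁ : A → B₁) (f₂ : A → B₂)
    (hf₁ : ∀ x y, d₁ (f₁ x) (f₁ y) = dA x y)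
    (hf₂ : ∀ x y, d₂ (f₂ x) (f₂ y) = dA x y) :
    ∃ (C : Type) (_ : Fintype C) (dC : C → C → Λ) (g₁ : B₁ → C) (g₂ : B₂ → C),
      IsLambdaUltrametric dC ∧
      (∀ x y, dC (g₁ x) (g₁ y) = d₁ x y) ∧
      (∀ x y, dC (g₂ x) (g₂ y) = d₂ x y) ∧
      (∀ a, g₁ (f₁ a) = g₂ (f₂ a)) := by
  classical
  have : Nonempty Λ := ⟨⊥⟩
  let _ : OrderTop Λ := Fintype.toOrderTop Λ
  have hp₁ := h₁.isLambdaPseudoUltrametric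
  have hp₂ := h₂.isLambdaPseudoUltrametric
  have hD := isLambdaPseudoUltrametric_glueDist_crossDist hp₁ hp₂ (f₁ := f₁) (f₂ := f₂)
    fun a b => by rw [hf₁, hf₂]
  exact ⟨Quotient hD.setoid, inferInstance, hD.quotientDist,
    fun x => ⟦.inl x⟧, fun y => ⟦.inr y⟧, hD.isLambdaUltrametric_quotientDist,
    fun _ _ => rfl, fun _ _ => rfl, fun a => Quotient.sound (crossDist_eq_bot hp₁ hp₂ a)⟩

/-- for a finite distributive lattice Λ, the class of all finite
Λ-ultrametric spaces has the amalgamation property. -/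
theorem stmt_1 {Λ : Type} [DistribLattice Λ] [OrderBot Λ] [Fintype Λ]
    (A B₁ B₂ : Type) [Fintype A] [Fintype B₁] [Fintype B₂]
    (dA : A → A → Λ) (d₁ : B₁ → B₁ → Λ) (d₂ : B₂ → B₂ → Λ)
    (hA : IsLambdaUltrametric dA) (h₁ : IsLambdaUltrametric d₁)
    (h₂ : IsLambdaUltrametric d₂)
    (f₁ : A → B₁) (f₂ : A → B₂)
    (hf₁ : ∀ x y, d₁ (f₁ x) (f₁ y) = dA x y)
    (hf₂ : ∀ x y, d₂ (f₂ x) (f₂ y) = dA x y) :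
    ∃ (C : Type) (_ : Fintype C) (dC : C → C → Λ) (g₁ : B₁ → C) (g₂ : B₂ → C),
      IsLambdaUltrametric dC ∧
      (∀ x y, dC (g₁ x) (g₁ y) = d₁ x y) ∧
      (∀ x y, dC (g₂ x) (g₂ y) = d₂ x y) ∧
      (∀ a, g₁ (f₁ a) = g₂ (f₂ a)) :=
  stmt_1_general A B₁ B₂ dA d₁ d₂ h₁ h₂ f₁ f₂ hf₁ hf₂
end

section
/- Let Λ be a finite lattice. If the class of all finite Λ-ultrametric spaces has the amalgamation property (with isometries as embeddings), then Λ is a distributive lattice. -/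
namespace IsLambdaUltrametric

variable {Λ X Y : Type*} [Lattice Λ] [OrderBot Λ] {d : X → X → Λ}

theorem symm (hd : IsLambdaUltrametric d) (x y : X) : d x y = d y x := hd.2.1 x y

theorem triangle (hd : IsLambdaUltrametric d) (x y z : X) : d x z ≤ d x y ⊔ d y z :=
  hd.2.2 x y z

theorem le_of_le_of_le (hd : IsLambdaUltrametric d) {x y z : X} {r : Λ}
    (hx : d x z ≤ r) (hy : d y z ≤ r) : d x y ≤ r :=
  (hd.triangle x z y).trans (sup_le hx (hd.symm z y ▸ hy))

theorem comap (hd : IsLambdaUltrametric d) {f : Y → X} (hf : Function.Injective f) :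
    IsLambdaUltrametric fun x y => d (f x) (f y) :=
  ⟨fun _ _ => (hd.1 _ _).trans hf.eq_iff, fun _ _ => hd.symm _ _, fun _ _ _ => hd.triangle _ _ _⟩

end IsLambdaUltrametric

namespace DistribOfAmalgamation

inductive Pt₃ : Type | p | q₁ | q₂
  deriving DecidableEq

instance : Fintype Pt₃ := ⟨{.p, .q₁, .q₂}, fun x => by cases x <;> simp⟩

inductive Pt₄ : Type | p | q₁ | q₂ | w
  deriving DecidableEq

instance : Fintype Pt₄ := ⟨{.p, .q₁, .q₂, .w}, fun x => by cases x <;> simp⟩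

inductive Pt₅ : Type | p | q₁ | q₂ | z₁ | z₂
  deriving DecidableEq

instance : Fintype Pt₅ := ⟨{.p, .q₁, .q₂, .z₁, .z₂}, fun x => by cases x <;> simp⟩

def ι₄ : Pt₃ → Pt₄ | .p => .p | .q₁ => .q₁ | .q₂ => .q₂

def ι₅ : Pt₃ → Pt₅ | .p => .p | .q₁ => .q₁ | .q₂ => .q₂

theorem ι₄_injective : Function.Injective ι₄ := by decide

variable {Λ : Type} [Lattice Λ] [OrderBot Λ] (a b c : Λ)

def d₄ : Pt₄ → Pt₄ → Λ
  | .p, .p => ⊥ | .p, .q₁ => a ⊔ b | .p, .q₂ => a ⊔ c | .p, .w => a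
  | .q₁, .p => a ⊔ b | .q₁, .q₁ => ⊥ | .q₁, .q₂ => b ⊔ c | .q₁, .w => b
  | .q₂, .p => a ⊔ c | .q₂, .q₁ => b ⊔ c | .q₂, .q₂ => ⊥ | .q₂, .w => c
  | .w, .p => a | .w, .q₁ => b | .w, .q₂ => c | .w, .w => ⊥

/-- The padding `⊔ a ⊓ (b ⊔ c)` of `d(q₁, z₂)` and `d(q₂, z₁)` is forced by the triangle
inequality through the other `zᵢ`. -/
def d₅ : Pt₅ → Pt₅ → Λ
  | .p, .p => ⊥ | .p, .q₁ => a ⊔ b | .p, .q₂ => a ⊔ c | .p, .z₁ => a | .p, .z₂ => a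
  | .q₁, .p => a ⊔ b | .q₁, .q₁ => ⊥ | .q₁, .q₂ => b ⊔ c
  | .q₁, .z₁ => b | .q₁, .z₂ => b ⊔ a ⊓ (b ⊔ c)
  | .q₂, .p => a ⊔ c | .q₂, .q₁ => b ⊔ c | .q₂, .q₂ => ⊥
  | .q₂, .z₁ => c ⊔ a ⊓ (b ⊔ c) | .q₂, .z₂ => c
  | .z₁, .p => a | .z₁, .q₁ => b | .z₁, .q₂ => c ⊔ a ⊓ (b ⊔ c)
  | .z₁, .z₁ => ⊥ | .z₁, .z₂ => a ⊓ (b ⊔ c)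
  | .z₂, .p => a | .z₂, .q₁ => b ⊔ a ⊓ (b ⊔ c) | .z₂, .q₂ => c
  | .z₂, .z₁ => a ⊓ (b ⊔ c) | .z₂, .z₂ => ⊥

def d₃ (x y : Pt₃) : Λ := d₄ a b c (ι₄ x) (ι₄ y)

theorem d₅_ι₅ (x y : Pt₃) : d₅ a b c (ι₅ x) (ι₅ y) = d₃ a b c x y := by
  cases x <;> cases y <;> rfl

variable {a b c}

theorem isLambdaUltrametric_d₄ (ha : a ≠ ⊥) (hb : b ≠ ⊥) (hc : c ≠ ⊥) :
    IsLambdaUltrametric (d₄ a b c) := by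
  refine ⟨fun x y => ?_, fun x y => ?_, fun x y z => ?_⟩
  · cases x <;> cases y <;> simp_all [d₄]
  · cases x <;> cases y <;> rfl
  · cases x <;> cases y <;> cases z <;> dsimp only [d₄] <;>
      solve_by_elim (maxDepth := 8) [sup_le, le_sup_of_le_left, le_sup_of_le_right, le_refl,
        bot_le]

theorem isLambdaUltrametric_d₅ (hb : b ≠ ⊥) (hc : c ≠ ⊥) (hm : a ⊓ (b ⊔ c) ≠ ⊥) :
    IsLambdaUltrametric (d₅ a b c) := by
  have ha : a ≠ ⊥ := ne_bot_of_le_ne_bot hm inf_le_left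
  have hma : a ⊓ (b ⊔ c) ≤ a := inf_le_left
  have hmbc : a ⊓ (b ⊔ c) ≤ b ⊔ c := inf_le_right
  refine ⟨fun x y => ?_, fun x y => ?_, fun x y z => ?_⟩
  · cases x <;> cases y <;> simp_all [d₅]
  · cases x <;> cases y <;> rfl
  · cases x <;> cases y <;> cases z <;> dsimp only [d₅] <;>
      solve_by_elim (maxDepth := 8) [sup_le, le_sup_of_le_left, le_sup_of_le_right, le_refl,
        bot_le, hma, hmbc]

theorem inf_sup_le_of_isometries {C : Type} {dC : C → C → Λ} (hC : IsLambdaUltrametric dC)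
    {g₅ : Pt₅ → C} {g₄ : Pt₄ → C} (h₅ : ∀ x y, dC (g₅ x) (g₅ y) = d₅ a b c x y)
    (h₄ : ∀ x y, dC (g₄ x) (g₄ y) = d₄ a b c x y) (hg : ∀ x, g₅ (ι₅ x) = g₄ (ι₄ x)) :
    a ⊓ (b ⊔ c) ≤ a ⊓ b ⊔ a ⊓ c := by
  have near (z : Pt₅) (x : Pt₃) {r : Λ} (hz : d₅ a b c z (ι₅ x) ≤ r)
      (hw : d₄ a b c .w (ι₄ x) ≤ r) : dC (g₅ z) (g₄ .w) ≤ r :=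
    hC.le_of_le_of_le (by rwa [h₅]) (by rwa [hg, h₄])
  have h₁ : dC (g₅ .z₁) (g₄ .w) ≤ a ⊓ b :=
    le_inf (near .z₁ .p le_rfl le_rfl) (near .z₁ .q₁ le_rfl le_rfl)
  have h₂ : dC (g₅ .z₂) (g₄ .w) ≤ a ⊓ c :=
    le_inf (near .z₂ .p le_rfl le_rfl) (near .z₂ .q₂ le_rfl le_rfl)
  calc a ⊓ (b ⊔ c) = dC (g₅ .z₁) (g₅ .z₂) := (h₅ .z₁ .z₂).symm
    _ ≤ dC (g₅ .z₁) (g₄ .w) ⊔ dC (g₄ .w) (g₅ .z₂) := hC.triangle _ _ _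
    _ ≤ a ⊓ b ⊔ a ⊓ c := sup_le_sup h₁ (hC.symm (g₅ .z₂) _ ▸ h₂)

end DistribOfAmalgamation

open DistribOfAmalgamation in
theorem stmt_3_general {Λ : Type} [Lattice Λ] [OrderBot Λ]
    (amalg : ∀ (A B₁ B₂ : Type) [Fintype A] [Fintype B₁] [Fintype B₂]
      (dA : A → A → Λ) (d₁ : B₁ → B₁ → Λ) (d₂ : B₂ → B₂ → Λ),
      IsLambdaUltrametric dA → IsLambdaUltrametric d₁ → IsLambdaUltrametric d₂ →
      ∀ (f₁ : A → B₁) (f₂ : A → B₂),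
        (∀ x y, d₁ (f₁ x) (f₁ y) = dA x y) →
        (∀ x y, d₂ (f₂ x) (f₂ y) = dA x y) →
        ∃ (C : Type) (_ : Fintype C) (dC : C → C → Λ)
          (g₁ : B₁ → C) (g₂ : B₂ → C),
          IsLambdaUltrametric dC ∧
          (∀ x y, dC (g₁ x) (g₁ y) = d₁ x y) ∧
          (∀ x y, dC (g₂ x) (g₂ y) = d₂ x y) ∧
          (∀ a, g₁ (f₁ a) = g₂ (f₂ a))) :
    ∀ a b c : Λ, a ⊓ (b ⊔ c) ≤ (a ⊓ b) ⊔ (a ⊓ c) := by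
  intro a b c
  by_cases hm : a ⊓ (b ⊔ c) = ⊥
  · simp [hm]
  by_cases hb : b = ⊥
  · simp [hb]
  by_cases hc : c = ⊥
  · simp [hc]
  have hd₄ := isLambdaUltrametric_d₄ (ne_bot_of_le_ne_bot hm inf_le_left) hb hc
  obtain ⟨C, _, dC, g₅, g₄, hC, h₅, h₄, hg⟩ :=
    amalg Pt₃ Pt₅ Pt₄ (d₃ a b c) (d₅ a b c) (d₄ a b c) (hd₄.comap ι₄_injective)
      (isLambdaUltrametric_d₅ hb hc hm) hd₄ ι₅ ι₄ (d₅_ι₅ a b c) (fun _ _ => rfl)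
  exact inf_sup_le_of_isometries hC h₅ h₄ hg

/-- if the class of all finite Λ-ultrametric spaces (Λ a finite
lattice) has the amalgamation property, then Λ is distributive. -/
theorem stmt_3 {Λ : Type} [Lattice Λ] [OrderBot Λ] [Fintype Λ]
    (amalg : ∀ (A B₁ B₂ : Type) [Fintype A] [Fintype B₁] [Fintype B₂]
      (dA : A → A → Λ) (d₁ : B₁ → B₁ → Λ) (d₂ : B₂ → B₂ → Λ),
      IsLambdaUltrametric dA → IsLambdaUltrametric d₁ → IsLambdaUltrametric d₂ →
      ∀ (f₁ : A → B₁) (f₂ : A → B₂),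
        (∀ x y, d₁ (f₁ x) (f₁ y) = dA x y) →
        (∀ x y, d₂ (f₂ x) (f₂ y) = dA x y) →
        ∃ (C : Type) (_ : Fintype C) (dC : C → C → Λ)
          (g₁ : B₁ → C) (g₂ : B₂ → C),
          IsLambdaUltrametric dC ∧
          (∀ x y, dC (g₁ x) (g₁ y) = d₁ x y) ∧
          (∀ x y, dC (g₂ x) (g₂ y) = d₂ x y) ∧
          (∀ a, g₁ (f₁ a) = g₂ (f₂ a))) :
    ∀ a b c : Λ, a ⊓ (b ⊔ c) ≤ (a ⊓ b) ⊔ (a ⊓ c) :=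
  stmt_3_general amalg
end

section
/- Let Λ be a lattice with least element ⊥, let (X,d) be a Λ-ultrametric space, and let E, F₁, F₂ ∈ Λ with E = F₁ ⊓ F₂. If R is a subquotient order on X from F₁ to F₁ ⊔ F₂, then the relation R' defined by R' x y :↔ (d(x,y) ≤ F₂ and R x y) is a subquotient order on X from E to F₂. -/
/-- A subquotient order from `E` to `F` on a `Λ`-ultrametric space `(X, d)`. -/
def IsSubquotientOrder {Λ X : Type*} [Lattice Λ] (d : X → X → Λ) (E F : Λ)
    (R : X → X → Prop) : Prop :=
  (∀ x y z, R x y → R y z → R x z) ∧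
  (∀ x y, (R x y ∨ R y x) ↔ (d x y ≤ F ∧ ¬ d x y ≤ E)) ∧
  (∀ x x' y y', d x x' ≤ E → d y y' ≤ E → (R x y ↔ R x' y'))

namespace IsLambdaUltrametric

variable {Λ X : Type*} [Lattice Λ] [OrderBot Λ] {d : X → X → Λ}

theorem le_iff_swap (hd : IsLambdaUltrametric d) {x y : X} {F : Λ} : d x y ≤ F ↔ d y x ≤ F := by
  rw [hd.2.1 x y]

theorem le_trans_of_le (hd : IsLambdaUltrametric d) {x y z : X} {F : Λ}
    (hxy : d x y ≤ F) (hyz : d y z ≤ F) : d x z ≤ F :=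
  (hd.2.2 x y z).trans (sup_le hxy hyz)

theorem le_iff_of_le (hd : IsLambdaUltrametric d) {x x' y y' : X} {F : Λ}
    (hx : d x x' ≤ F) (hy : d y y' ≤ F) : d x y ≤ F ↔ d x' y' ≤ F :=
  ⟨fun h => hd.le_trans_of_le (hd.le_iff_swap.mp hx) (hd.le_trans_of_le h hy),
    fun h => hd.le_trans_of_le hx (hd.le_trans_of_le h (hd.le_iff_swap.mp hy))⟩

end IsLambdaUltrametric

theorem IsSubquotientOrder.restrict_le {Λ X : Type*} [Lattice Λ] [OrderBot Λ]
    {d : X → X → Λ} (hd : IsLambdaUltrametric d) {F₁ F₂ G : Λ} {R : X → X → Prop}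
    (hR : IsSubquotientOrder d F₁ G R) (hF₂ : F₂ ≤ G) :
    IsSubquotientOrder d (F₁ ⊓ F₂) F₂ (fun x y => d x y ≤ F₂ ∧ R x y) := by
  obtain ⟨htrans, hcomp, hcong⟩ := hR
  refine ⟨?_, fun x y => ?_, fun x x' y y' hx hy => ?_⟩
  · rintro x y z ⟨hxy, rxy⟩ ⟨hyz, ryz⟩
    exact ⟨hd.le_trans_of_le hxy hyz, htrans x y z rxy ryz⟩
  · have hcomp_xy : d x y ≤ F₂ → (R x y ∨ R y x ↔ ¬ d x y ≤ F₁ ⊓ F₂) := fun h => by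
      rw [hcomp, le_inf_iff]
      simp only [h, h.trans hF₂, true_and, and_true]
    by_cases h : d x y ≤ F₂
    · simp only [h, hd.le_iff_swap.mp h, true_and, ← hcomp_xy h]
    · simp only [h, hd.le_iff_swap (F := F₂), false_and, or_self]
  · exact and_congr (hd.le_iff_of_le (le_inf_iff.mp hx).2 (le_inf_iff.mp hy).2)
      (hcong x x' y y' (le_inf_iff.mp hx).1 (le_inf_iff.mp hy).1)

/-- if `E = F₁ ⊓ F₂` and `R` is a subquotient order from `F₁` to
`F₁ ⊔ F₂`, then `R' x y :↔ (d x y ≤ F₂ ∧ R x y)` is a subquotient order from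
`E` to `F₂`. -/
theorem stmt_4 {Λ X : Type*} [Lattice Λ] [OrderBot Λ]
    (d : X → X → Λ) (hd : IsLambdaUltrametric d)
    (E F₁ F₂ : Λ) (hE : E = F₁ ⊓ F₂)
    (R : X → X → Prop) (hR : IsSubquotientOrder d F₁ (F₁ ⊔ F₂) R) :
    IsSubquotientOrder d E F₂ (fun x y => d x y ≤ F₂ ∧ R x y) :=
  hE ▸ hR.restrict_le hd le_sup_right
end

section
/- Let X be a set and let S be a finite set of equivalence relations on X that contains the equality relation and is closed under binary intersection. Assume the infinite index property: for all E, F ∈ S with F strictly contained in E (as relations), for every x ∈ X there are infinitely many pairwise F-inequivalent elements that are E-equivalent to x. Let E ∈ S, let C be an E-class (the set of elements E-equivalent to some fixed x₀), and let (Eᵢ, Bᵢ) for i in a finite index set be pairs where Eᵢ ∈ S, Bᵢ is an Eᵢ-class, and E is not contained in Eᵢ (as relations). Then there exists c ∈ C with c ∉ Bᵢ for every i. -/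
/-!
Induct on the number of classes to avoid. Among the relations `E ⊓ Eᵢ` pick a maximal one,
`F`; it is strictly below `E`, so by the infinite index property the `E`-class of `x₀`
contains infinitely many pairwise `F`-inequivalent points. Every `i` with `F ≤ Eᵢ` has
`E ⊓ Eᵢ = F` by maximality, so `Bᵢ` contains at most one of these points, and some point `t`
of the transversal avoids all those `Bᵢ`. Each such `Bᵢ` is a union of `F`-classes, so the
whole `F`-class of `t` avoids it, and the induction hypothesis applied to `F`, the class of
`t` and the remaining indices (those with `F ≰ Eᵢ`, a set not containing `i` with
`F = E ⊓ Eᵢ`) finishes the proof.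
-/

section

variable {X ι : Type*}

def InfiniteIndexProperty (S : Set (X → X → Prop)) : Prop :=
  ∀ E ∈ S, ∀ F ∈ S, F < E → ∀ x : X,
    ∃ T : Set X, T.Infinite ∧ (∀ y ∈ T, E x y) ∧ T.Pairwise fun a b => ¬ F a b

theorem Set.Pairwise.subsingleton_setOf_rel {E R F : X → X → Prop}
    (hE : Equivalence E) (hR : Equivalence R) (hERF : E ⊓ R ≤ F)
    {T : Set X} {x₀ : X} (hTE : ∀ y ∈ T, E x₀ y) (hT : T.Pairwise fun a b => ¬ F a b)
    (b : X) : {y ∈ T | R b y}.Subsingleton := by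
  rintro y ⟨hyT, hby⟩ z ⟨hzT, hbz⟩
  by_contra hyz
  exact hT hyT hzT hyz <|
    hERF y z ⟨hE.trans (hE.symm (hTE y hyT)) (hTE z hzT), hR.trans (hR.symm hby) hbz⟩

theorem Set.Infinite.exists_mem_forall_not_rel {E F : X → X → Prop} (hE : Equivalence E)
    {T : Set X} (hT : T.Infinite) {x₀ : X} (hTE : ∀ y ∈ T, E x₀ y)
    (hTF : T.Pairwise fun a b => ¬ F a b) (s : Finset ι) (R : ι → X → X → Prop)
    (hR : ∀ i ∈ s, Equivalence (R i)) (hERF : ∀ i ∈ s, E ⊓ R i ≤ F) (b : ι → X) :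
    ∃ t ∈ T, ∀ i ∈ s, ¬ R i (b i) t := by
  have hfin : (⋃ i ∈ s, {y ∈ T | R i (b i) y}).Finite :=
    s.finite_toSet.biUnion fun i hi =>
      (hTF.subsingleton_setOf_rel hE (hR i hi) (hERF i hi) hTE (b i)).finite
  obtain ⟨t, htT, ht⟩ := hT.exists_notMem_finite hfin
  exact ⟨t, htT, fun i hi hbt => ht (Set.mem_biUnion hi ⟨htT, hbt⟩)⟩

theorem exists_rel_forall_not_rel_of_infiniteIndexProperty {S : Set (X → X → Prop)}
    (hequiv : ∀ E ∈ S, Equivalence E) (hinter : ∀ E ∈ S, ∀ F ∈ S, E ⊓ F ∈ S)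
    (hIIP : InfiniteIndexProperty S) (R : ι → X → X → Prop) (b : ι → X) (s : Finset ι)
    (hR : ∀ i ∈ s, R i ∈ S) {E : X → X → Prop} (hE : E ∈ S) (hnot : ∀ i ∈ s, ¬ E ≤ R i)
    (x₀ : X) : ∃ c, E x₀ c ∧ ∀ i ∈ s, ¬ R i (b i) c := by
  classical
  induction s using Finset.strongInduction generalizing E x₀ with
  | _ s ih =>
  rcases s.eq_empty_or_nonempty with rfl | hs
  · exact ⟨x₀, (hequiv E hE).refl x₀, by simp⟩
  obtain ⟨j, hjs, hjmax⟩ := s.exists_maximalFor (fun i => E ⊓ R i) hs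
  set F := E ⊓ R j
  have hFS : F ∈ S := hinter E hE (R j) (hR j hjs)
  have hFE : F < E := lt_of_le_not_ge inf_le_left fun h => hnot j hjs (h.trans inf_le_right)
  obtain ⟨T, hTinf, hTE, hTF⟩ := hIIP E hE F hFS hFE x₀
  obtain ⟨t, htT, ht⟩ := hTinf.exists_mem_forall_not_rel (hequiv E hE) hTE hTF
    (s.filter fun i => F ≤ R i) R (fun i hi => hequiv _ (hR i (Finset.mem_filter.1 hi).1))
    (fun i hi => hjmax (Finset.mem_filter.1 hi).1
      (le_inf inf_le_left (Finset.mem_filter.1 hi).2)) b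
  have hsub : s.filter (fun i => ¬ F ≤ R i) ⊂ s :=
    Finset.filter_ssubset.2 ⟨j, hjs, not_not.2 inf_le_right⟩
  obtain ⟨c, htc, hc⟩ := ih _ hsub (fun i hi => hR i (Finset.mem_filter.1 hi).1) hFS
    (fun i hi => (Finset.mem_filter.1 hi).2) t
  refine ⟨c, (hequiv E hE).trans (hTE t htT) (hFE.le t c htc), fun i hi hbc => ?_⟩
  by_cases hFR : F ≤ R i
  · have hRi := hequiv _ (hR i hi)
    exact ht i (Finset.mem_filter.2 ⟨hi, hFR⟩) (hRi.trans hbc (hRi.symm (hFR t c htc)))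
  · exact hc i (Finset.mem_filter.2 ⟨hi, hFR⟩) hbc

end

theorem stmt_5_general {X : Type*} (S : Set (X → X → Prop))
    (hequiv : ∀ E ∈ S, Equivalence E)
    (hinter : ∀ E ∈ S, ∀ F ∈ S, (fun x y => E x y ∧ F x y) ∈ S)
    -- infinite index property
    (hIIP : ∀ E ∈ S, ∀ F ∈ S, (∀ x y, F x y → E x y) →
      (¬ ∀ x y, E x y → F x y) →
      ∀ x : X, ∃ T : Set X, T.Infinite ∧ (∀ y ∈ T, E x y) ∧
        T.Pairwise fun a b => ¬ F a b)
    (E : X → X → Prop) (hE : E ∈ S) (x₀ : X)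
    {ι : Type*} [Finite ι] (ER : ι → X → X → Prop) (hER : ∀ i, ER i ∈ S)
    (b : ι → X)
    (hnot : ∀ i, ¬ ∀ x y, E x y → ER i x y) :
    ∃ c, E x₀ c ∧ ∀ i, ¬ ER i (b i) c := by
  have := Fintype.ofFinite ι
  obtain ⟨c, hEc, hc⟩ := exists_rel_forall_not_rel_of_infiniteIndexProperty hequiv hinter
    (fun E hE F hF hFE => hIIP E hE F hF hFE.le hFE.not_ge) ER b Finset.univ
    (fun i _ => hER i) hE (fun i _ => hnot i) x₀
  exact ⟨c, hEc, fun i => hc i (Finset.mem_univ i)⟩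

/-- Neumann-style covering lemma for a finite meet-closed family
of equivalence relations with the infinite index property: an `E`-class is not
covered by finitely many classes of relations not containing `E`. -/
theorem stmt_5 {X : Type*} (S : Set (X → X → Prop)) (hfin : S.Finite)
    (hequiv : ∀ E ∈ S, Equivalence E)
    (heq : (fun x y : X => x = y) ∈ S)
    (hinter : ∀ E ∈ S, ∀ F ∈ S, (fun x y => E x y ∧ F x y) ∈ S)
    -- infinite index property
    (hIIP : ∀ E ∈ S, ∀ F ∈ S, (∀ x y, F x y → E x y) →
      (¬ ∀ x y, E x y → F x y) →
      ∀ x : X, ∃ T : Set X, T.Infinite ∧ (∀ y ∈ T, E x y) ∧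
        T.Pairwise fun a b => ¬ F a b)
    (E : X → X → Prop) (hE : E ∈ S) (x₀ : X)
    {ι : Type*} [Finite ι] (ER : ι → X → X → Prop) (hER : ∀ i, ER i ∈ S)
    (b : ι → X)
    (hnot : ∀ i, ¬ ∀ x y, E x y → ER i x y) :
    ∃ c, E x₀ c ∧ ∀ i, ¬ ER i (b i) c :=
  stmt_5_general S hequiv hinter hIIP E hE x₀ ER hER b hnot
end

section
/- Let X be a set and let S be a finite set of equivalence relations on X that contains the equality relation and the total (always-true) relation and is closed under binary intersection. For E, G ∈ S let E ∨ G denote the least member of S containing both E and G, namely the intersection of all members of S containing both (this exists since S is finite, closed under intersection, and contains the total relation). Assume the infinite index property: for all E, F ∈ S with F strictly contained in E, for every x ∈ X there are infinitely many pairwise F-inequivalent elements that are E-equivalent to x. Assume the structure (X, (E)_{E∈S}) is ultrahomogeneous: every bijection f between finite subsets of X satisfying E x y ↔ E (f x) (f y) for all E ∈ S extends to a bijection g of X onto itself satisfying E x y ↔ E (g x) (g y) for all E ∈ S and all x, y. Then the lattice (S, ⊆) is distributive: for all E, F, G ∈ S, (E ∨ G) ∩ (F ∨ G) ⊆ (E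 ∩ F) ∨ G. -/
/-!
Read the least member of `S` relating `u` and `v` as an `S`-valued distance `d(u, v)`.
The infinite index property gives free extensions: for `A ∈ S`, a point `v` and a
finite `Y`, some `w` has `d(u, w) = d(u, v) ∨ A` for all `u ∈ Y`. By well-founded induction on
`A`, the members below `A` with free extensions have a largest one `M`. If `M ≠ A`, every member
strictly below `A` lies below `M`; an infinite `A`-class of pairwise `M`-inequivalent points then
contains two points with the same type over `Y`, and either of them is the required `w`.

For distributivity let `D = (E ∨ G) ∩ (F ∨ G)`. Take `x₁, y₁, y₂` with `d(w, x₁) = E`,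
`d(w, y₁) = F`, `d(w, y₂) = G` and `d(x₁, y₂) = E ∨ G`, `d(y₁, y₂) = F ∨ G`, and `y₃` free at
distance `D` from `y₂`. As `D ≤ E ∨ G` and `D ≤ F ∨ G`, moving `y₂` to `y₃` while fixing `x₁, y₁`
preserves all distances, so it extends to an automorphism `g`. Then `d(w, g w) ≤ E ∩ F` and
`d(g w, y₃) ≤ G`, whence `D = d(w, y₃) ≤ (E ∩ F) ∨ G`.
-/

namespace EquivRelLattice

variable {X : Type*} {S : Set (X → X → Prop)} {A B E F G H : X → X → Prop}

def HasInfiniteIndex (S : Set (X → X → Prop)) : Prop :=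
  ∀ E ∈ S, ∀ F ∈ S, F ≤ E → ¬ E ≤ F →
    ∀ x : X, ∃ T : Set X, T.Infinite ∧ (∀ y ∈ T, E x y) ∧ T.Pairwise fun a b => ¬ F a b

def IsUltrahomogeneous (S : Set (X → X → Prop)) : Prop :=
  ∀ s : Set X, s.Finite → ∀ f : X → X, Set.InjOn f s →
    (∀ E ∈ S, ∀ x ∈ s, ∀ y ∈ s, E x y ↔ E (f x) (f y)) →
    ∃ g : X ≃ X, (∀ E ∈ S, ∀ x y, E x y ↔ E (g x) (g y)) ∧ ∀ x ∈ s, g x = f x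

def join (S : Set (X → X → Prop)) (E G : X → X → Prop) : X → X → Prop :=
  sInf {H | H ∈ S ∧ E ≤ H ∧ G ≤ H}

theorem join_apply {x y : X} : join S E G x y ↔ ∀ H ∈ S, E ≤ H → G ≤ H → H x y := by
  simp only [join, sInf_apply, iInf_apply, iInf_Prop_eq, Subtype.forall, Set.mem_ofPred_eq,
    and_imp]

theorem join_mem (hfin : S.Finite) (htop : ⊤ ∈ S) (hinf : InfClosed S) (E G : X → X → Prop) :
    join S E G ∈ S :=
  hinf.sInf_mem (hfin.subset fun _ h => h.1) htop fun _ h => h.1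

theorem le_join_left : E ≤ join S E G := le_sInf fun _ h => h.2.1

theorem le_join_right : G ≤ join S E G := le_sInf fun _ h => h.2.2

theorem join_le (hH : H ∈ S) (hE : E ≤ H) (hG : G ≤ H) : join S E G ≤ H := sInf_le ⟨hH, hE, hG⟩

theorem join_le_iff (hH : H ∈ S) : join S E G ≤ H ↔ E ≤ H ∧ G ≤ H :=
  ⟨fun h => ⟨le_join_left.trans h, le_join_right.trans h⟩, fun h => join_le hH h.1 h.2⟩

theorem eq_le_of_equivalence (h : Equivalence H) : (fun x y : X => x = y) ≤ H :=
  fun x _ hxy => hxy ▸ h.refl x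

def HasFreeExtensions (S : Set (X → X → Prop)) (A : X → X → Prop) : Prop :=
  ∀ (v : X) (Y : Finset X), ∃ w, ∀ u ∈ Y, ∀ H ∈ S, H u w ↔ H u v ∧ A ≤ H

theorem hasFreeExtensions_eq (hequiv : ∀ E ∈ S, Equivalence E) :
    HasFreeExtensions S fun x y : X => x = y :=
  fun v _ => ⟨v, fun _ _ H hH => (and_iff_left (eq_le_of_equivalence (hequiv H hH))).symm⟩

theorem HasFreeExtensions.join (hA : HasFreeExtensions S A) (hB : HasFreeExtensions S B) :
    HasFreeExtensions S (join S A B) := by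
  intro v Y
  obtain ⟨w₁, hw₁⟩ := hA v Y
  obtain ⟨w, hw⟩ := hB w₁ Y
  exact ⟨w, fun u hu H hH => by rw [hw u hu H hH, hw₁ u hu H hH, join_le_iff hH, and_assoc]⟩

theorem HasFreeExtensions.exists_rel_iff (hequiv : ∀ E ∈ S, Equivalence E)
    (hA : HasFreeExtensions S A) (v : X) : ∃ w, ∀ H ∈ S, H v w ↔ A ≤ H := by
  obtain ⟨w, hw⟩ := hA v {v}
  exact ⟨w, fun H hH => by rw [hw v (Finset.mem_singleton_self v) H hH,
    and_iff_right ((hequiv H hH).refl v)]⟩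

theorem hasFreeExtensions_of_lt (hfin : S.Finite) (hequiv : ∀ E ∈ S, Equivalence E)
    (hinf : InfClosed S) (hIIP : HasInfiniteIndex S)
    {M : X → X → Prop} (hA : A ∈ S) (hM : M ∈ S) (hMA : M < A)
    (hbelow : ∀ B ∈ S, B < A → B ≤ M) : HasFreeExtensions S A := by
  intro v Y
  obtain ⟨T, hTinf, hvT, hTM⟩ := hIIP A hA M hM hMA.le hMA.not_ge v
  have := hfin.to_subtype
  obtain ⟨t₁, ht₁, t₂, ht₂, hne, htype⟩ := hTinf.exists_ne_map_eq_of_mapsTo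
    (f := fun t (u : Y) (H : S) => (H : X → X → Prop) u t) (Set.mapsTo_univ _ _) Set.finite_univ
  have hA₁₂ : A t₁ t₂ := (hequiv A hA).trans ((hequiv A hA).symm (hvT t₁ ht₁)) (hvT t₂ ht₂)
  -- `H ⊓ A` relates `t₁, t₂`, which are not `M`-related, so it is not strictly below `A`
  have hle : ∀ H ∈ S, H t₁ t₂ → A ≤ H := by
    intro H hH h
    by_contra hAH
    have hlt : H ⊓ A < A := inf_le_right.lt_of_not_ge fun h' => hAH (h'.trans inf_le_left)
    exact hTM ht₁ ht₂ hne (hbelow _ (hinf hH hA) hlt _ _ ⟨h, hA₁₂⟩)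
  refine ⟨t₁, fun u hu H hH => ⟨fun h => ?_, fun ⟨h, hAH⟩ =>
    (hequiv H hH).trans h (hAH _ _ (hvT t₁ ht₁))⟩⟩
  have h₂ : H u t₂ := (congrFun (congrFun htype ⟨u, hu⟩) ⟨H, hH⟩).mp h
  have hAH := hle H hH ((hequiv H hH).trans ((hequiv H hH).symm h) h₂)
  exact ⟨(hequiv H hH).trans h ((hequiv H hH).symm (hAH _ _ (hvT t₁ ht₁))), hAH⟩

theorem hasFreeExtensions (hfin : S.Finite) (hequiv : ∀ E ∈ S, Equivalence E)
    (heq : (fun x y : X => x = y) ∈ S) (htop : ⊤ ∈ S) (hinf : InfClosed S)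
    (hIIP : HasInfiniteIndex S) (hA : A ∈ S) : HasFreeExtensions S A := by
  refine hfin.wellFoundedOn.induction (r := (· < ·)) hA fun A hA ih => ?_
  have hfinA : {C | C ∈ S ∧ C ≤ A ∧ HasFreeExtensions S C}.Finite := hfin.subset fun _ h => h.1
  obtain ⟨M, ⟨hMS, hMA, hMext⟩, hmax⟩ := hfinA.exists_maximal
    ⟨_, heq, eq_le_of_equivalence (hequiv A hA), hasFreeExtensions_eq hequiv⟩
  have hle : ∀ B ∈ S, B ≤ A → HasFreeExtensions S B → B ≤ M := fun B hB hBA hBext =>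
    le_join_right.trans <| hmax ⟨join_mem hfin htop hinf M B, join_le hA hMA hBA,
      hMext.join hBext⟩ le_join_left
  rcases hMA.eq_or_lt with rfl | hMA
  · exact hMext
  · exact hasFreeExtensions_of_lt hfin hequiv hinf hIIP hA hMS hMA
      fun B hB hBA => hle B hB hBA.le (ih B hB hBA)

theorem exists_equiv_apply_eq {ι : Type*} [Finite ι] (heq : (fun x y : X => x = y) ∈ S)
    (hhom : IsUltrahomogeneous S) (a b : ι → X)
    (hab : ∀ H ∈ S, ∀ i j, H (a i) (a j) ↔ H (b i) (b j)) :
    ∃ g : X ≃ X, (∀ H ∈ S, ∀ x y, H x y ↔ H (g x) (g y)) ∧ ∀ i, g (a i) = b i := by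
  have hf : ∀ i, Function.extend a b id (a i) = b i :=
    Function.FactorsThrough.extend_apply (fun i j h => (hab _ heq i j).1 h) id
  obtain ⟨g, hg, hga⟩ := hhom (Set.range a) (Set.finite_range a) (Function.extend a b id)
    (by rintro _ ⟨i, rfl⟩ _ ⟨j, rfl⟩ h; rw [hf, hf] at h; exact (hab _ heq i j).2 h)
    (by rintro H hH _ ⟨i, rfl⟩ _ ⟨j, rfl⟩; rw [hf, hf]; exact hab H hH i j)
  exact ⟨g, hg, fun i => (hga _ ⟨i, rfl⟩).trans (hf i)⟩

theorem join_inf_join_le (hfin : S.Finite) (hequiv : ∀ E ∈ S, Equivalence E)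
    (heq : (fun x y : X => x = y) ∈ S) (htop : ⊤ ∈ S) (hinf : InfClosed S)
    (hIIP : HasInfiniteIndex S) (hhom : IsUltrahomogeneous S)
    (hE : E ∈ S) (hF : F ∈ S) (hG : G ∈ S) :
    join S E G ⊓ join S F G ≤ join S (E ⊓ F) G := by
  classical
  set D := join S E G ⊓ join S F G
  have hD : D ∈ S := hinf (join_mem hfin htop hinf E G) (join_mem hfin htop hinf F G)
  have hext : ∀ {A}, A ∈ S → HasFreeExtensions S A :=
    hasFreeExtensions hfin hequiv heq htop hinf hIIP
  suffices ∀ w : X, D ≤ join S (E ⊓ F) G from fun w => this w w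
  intro w
  obtain ⟨x₁, hx₁⟩ := (hext hE).exists_rel_iff hequiv w
  obtain ⟨y₁, hy₁⟩ := (hext hF).exists_rel_iff hequiv w
  obtain ⟨y₂, hy₂⟩ := hext hG w {w, x₁, y₁}
  obtain ⟨y₃, hy₃⟩ := hext hD y₂ {w, x₁, y₁}
  have hy₂y₃ : ∀ P z, z ∈ ({w, x₁, y₁} : Finset X) → (∀ H ∈ S, H w z → P ≤ H) →
      D ≤ join S P G → ∀ H ∈ S, H z y₂ ↔ H z y₃ := by
    intro P z hz hwz hDP H hH
    rw [hy₃ z hz H hH, iff_self_and]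
    intro h
    obtain ⟨hzw, hGH⟩ := (hy₂ z hz H hH).1 h
    exact hDP.trans (join_le hH (hwz H hH ((hequiv H hH).symm hzw)) hGH)
  have hab : ∀ H ∈ S, ∀ i j, H (![x₁, y₁, y₂] i) (![x₁, y₁, y₂] j) ↔
      H (![x₁, y₁, y₃] i) (![x₁, y₁, y₃] j) := by
    intro H hH i j
    have h₁ := hy₂y₃ E x₁ (by simp) (fun H hH => (hx₁ H hH).1) inf_le_left H hH
    have h₂ := hy₂y₃ F y₁ (by simp) (fun H hH => (hy₁ H hH).1) inf_le_right H hH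
    have hcomm : ∀ a b, H a b ↔ H b a := fun _ _ => ⟨(hequiv H hH).symm, (hequiv H hH).symm⟩
    fin_cases i <;> fin_cases j <;>
      simp [h₁, h₂, hcomm y₂, hcomm y₃, (hequiv H hH).refl y₂, (hequiv H hH).refl y₃]
  obtain ⟨g, hg, hga⟩ := exists_equiv_apply_eq heq hhom _ _ hab
  have hgw : ∀ H ∈ S, ∀ z, H w z → g z = z → H w (g w) := fun H hH z hwz hgz =>
    (hequiv H hH).trans hwz ((hequiv H hH).symm (hgz ▸ (hg H hH w z).1 hwz))
  have hEw : E w (g w) := hgw E hE x₁ ((hx₁ E hE).2 le_rfl) (hga 0)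
  have hFw : F w (g w) := hgw F hF y₁ ((hy₁ F hF).2 le_rfl) (hga 1)
  have hgy₂ : g y₂ = y₃ := hga 2
  have hGw : G (g w) y₃ := hgy₂ ▸ (hg G hG w y₂).1
    ((hy₂ w (by simp) G hG).2 ⟨(hequiv G hG).refl w, le_rfl⟩)
  have hJ : join S (E ⊓ F) G w y₃ := join_apply.2 fun H hH hEF hGH =>
    (hequiv H hH).trans (hEF _ _ ⟨hEw, hFw⟩) (hGH _ _ hGw)
  exact ((hy₃ w (by simp) _ (join_mem hfin htop hinf _ _)).1 hJ).2

end EquivRelLattice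

/-- for an ultrahomogeneous structure in a finite language of
equivalence relations satisfying the infinite index property, the lattice of
these equivalence relations is distributive:
`(E ∨ G) ∩ (F ∨ G) ⊆ (E ∩ F) ∨ G`, where the join of two members of `S` is the
intersection of all members of `S` containing both. -/
theorem stmt_6 {X : Type*} (S : Set (X → X → Prop)) (hfin : S.Finite)
    (hequiv : ∀ E ∈ S, Equivalence E)
    (heq : (fun x y : X => x = y) ∈ S)
    (htot : (fun _ _ : X => True) ∈ S)
    (hinter : ∀ E ∈ S, ∀ F ∈ S, (fun x y => E x y ∧ F x y) ∈ S)
    -- infinite index property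
    (hIIP : ∀ E ∈ S, ∀ F ∈ S, (∀ x y, F x y → E x y) →
      (¬ ∀ x y, E x y → F x y) →
      ∀ x : X, ∃ T : Set X, T.Infinite ∧ (∀ y ∈ T, E x y) ∧
        T.Pairwise fun a b => ¬ F a b)
    -- ultrahomogeneity
    (hhom : ∀ s : Set X, s.Finite → ∀ f : X → X,
      Set.InjOn f s →
      (∀ E ∈ S, ∀ x ∈ s, ∀ y ∈ s, E x y ↔ E (f x) (f y)) →
      ∃ g : X ≃ X, (∀ E ∈ S, ∀ x y, E x y ↔ E (g x) (g y)) ∧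
        ∀ x ∈ s, g x = f x) :
    ∀ E ∈ S, ∀ F ∈ S, ∀ G ∈ S, ∀ x y : X,
      (∀ H ∈ S, (∀ a b, E a b → H a b) → (∀ a b, G a b → H a b) → H x y) →
      (∀ H ∈ S, (∀ a b, F a b → H a b) → (∀ a b, G a b → H a b) → H x y) →
      (∀ H ∈ S, (∀ a b, E a b ∧ F a b → H a b) → (∀ a b, G a b → H a b) →
        H x y) := by
  intro E hE F hF G hG x y hEG hFG
  have hinf : InfClosed S := fun E hE F hF => hinter E hE F hF
  exact EquivRelLattice.join_apply.1 <|
    EquivRelLattice.join_inf_join_le hfin hequiv heq htot hinf hIIP hhom hE hF hG x y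
      ⟨EquivRelLattice.join_apply.2 hEG, EquivRelLattice.join_apply.2 hFG⟩
end

section
/- Let n ≥ 1 and let M be a set equipped with n strict linear orders <₁,…,<ₙ that is ultrahomogeneous. Let E and F be equivalence relations on M, each invariant under every automorphism of M (every bijection of M onto itself preserving each <ᵢ in both directions), and suppose F is strictly contained in E. Then every E-class contains infinitely many F-classes: for every x ∈ M there are infinitely many pairwise F-inequivalent elements that are E-equivalent to x. -/
/-- `M`, equipped with the family of strict linear orders `lt i`, is
ultrahomogeneous: every isomorphism between finite substructures extends to an
automorphism. -/
def Ultrahomog {n : ℕ} {M : Type*} (lt : Fin n → M → M → Prop) : Prop :=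
  ∀ s : Set M, s.Finite → ∀ f : M → M,
    (∀ x ∈ s, ∀ y ∈ s, ∀ i, lt i x y ↔ lt i (f x) (f y)) →
    ∃ g : M ≃ M, (∀ x y i, lt i x y ↔ lt i (g x) (g y)) ∧ ∀ x ∈ s, g x = f x

/-!
Pick `a, b` with `E a b` and `¬ F a b`; by homogeneity on singletons we may take `a = x`, and
there is an automorphism `σ` with `σ x = b`. In each order `σ` moves the orbit of `x`
monotonically in one direction, so for `j < k` the pair `(σ^j x, σ^k x)` has the same order type
as `(x, b)`. Homogeneity on two-point sets carries it onto `(x, b)`, so it is `E`-related and not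
`F`-related; hence `σ x, σ² x, …` are `E`-equivalent to `x` and pairwise `F`-inequivalent.
-/

namespace PermStructure

variable {n : ℕ} {M : Type*} {lt : Fin n → M → M → Prop}

def IsAut (lt : Fin n → M → M → Prop) (g : M ≃ M) : Prop :=
  ∀ x y i, lt i x y ↔ lt i (g x) (g y)

def IsInvariant (lt : Fin n → M → M → Prop) (R : M → M → Prop) : Prop :=
  ∀ g : M ≃ M, IsAut lt g → ∀ x y, R x y ↔ R (g x) (g y)

def SameOrderType (lt : Fin n → M → M → Prop) (p q : M × M) : Prop :=
  ∀ i, (lt i p.1 p.2 ↔ lt i q.1 q.2) ∧ (lt i p.2 p.1 ↔ lt i q.2 q.1)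

theorem IsAut.pow {g : M ≃ M} (hg : IsAut lt g) : ∀ k : ℕ, IsAut lt (g ^ k)
  | 0 => fun _ _ _ => Iff.rfl
  | k + 1 => fun x y i => (hg x y i).trans (hg.pow k (g x) (g y) i)

theorem IsAut.sameOrderType {g : M ≃ M} (hg : IsAut lt g) (x y : M) :
    SameOrderType lt (g x, g y) (x, y) :=
  fun i => ⟨(hg x y i).symm, (hg y x i).symm⟩

theorem SameOrderType.concat [∀ i, IsStrictTotalOrder M (lt i)] {x y z a b : M}
    (hxy : SameOrderType lt (x, y) (a, b)) (hyz : SameOrderType lt (y, z) (a, b)) :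
    SameOrderType lt (x, z) (a, b) := by
  intro i
  have := hxy i
  have := hyz i
  have := trichotomous_of (lt i) a b
  have := trichotomous_of (lt i) x y
  have := trichotomous_of (lt i) y z
  have : ∀ u v w, lt i u v → lt i v w → lt i u w := fun _ _ _ => _root_.trans
  have : ∀ u, ¬ lt i u u := irrefl
  grind

theorem IsAut.sameOrderType_pow_pow [∀ i, IsStrictTotalOrder M (lt i)] {σ : M ≃ M}
    (hσ : IsAut lt σ) (x : M) {j k : ℕ} (hjk : j < k) :
    SameOrderType lt ((σ ^ j) x, (σ ^ k) x) (x, σ x) := by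
  have step (m : ℕ) : SameOrderType lt ((σ ^ m) x, (σ ^ (m + 1)) x) (x, σ x) := by
    simpa only [pow_succ, Equiv.Perm.mul_apply] using (hσ.pow m).sameOrderType x (σ x)
  induction k, hjk using Nat.le_induction with
  | base => exact step j
  | succ k _ ih => exact ih.concat (step k)

end PermStructure

namespace Ultrahomog

open PermStructure

variable {n : ℕ} {M : Type*} {lt : Fin n → M → M → Prop}

theorem exists_isAut_apply_eq [∀ i, Std.Irrefl (lt i)] (hhom : Ultrahomog lt) (x y : M) :
    ∃ g : M ≃ M, IsAut lt g ∧ g x = y := by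
  obtain ⟨g, hg, hgx⟩ := hhom {x} (Set.finite_singleton x) (fun _ => y) (by
    rintro _ rfl _ rfl i
    exact iff_of_false (irrefl _) (irrefl y))
  exact ⟨g, hg, hgx x rfl⟩

theorem exists_isAut_apply_eq_pair [∀ i, Std.Irrefl (lt i)] (hhom : Ultrahomog lt)
    {a b x y : M} (hab : a ≠ b) (htype : SameOrderType lt (x, y) (a, b)) :
    ∃ g : M ≃ M, IsAut lt g ∧ g a = x ∧ g b = y := by
  classical
  let f : M → M := fun z => if z = a then x else y
  have hfa : f a = x := if_pos rfl
  have hfb : f b = y := if_neg hab.symm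
  obtain ⟨g, hg, hgf⟩ := hhom {a, b} (by simp) f (by
    rintro _ (rfl | rfl) _ (rfl | rfl) i
    · rw [hfa]; exact iff_of_false (irrefl _) (irrefl x)
    · rw [hfa, hfb]; exact (htype i).1.symm
    · rw [hfa, hfb]; exact (htype i).2.symm
    · rw [hfb]; exact iff_of_false (irrefl _) (irrefl y))
  exact ⟨g, hg, (hgf a (by simp)).trans hfa, (hgf b (by simp)).trans hfb⟩

theorem rel_iff_of_sameOrderType [∀ i, Std.Irrefl (lt i)] (hhom : Ultrahomog lt)
    {R : M → M → Prop} (hR : IsInvariant lt R) {a b x y : M} (hab : a ≠ b)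
    (htype : SameOrderType lt (x, y) (a, b)) : R x y ↔ R a b := by
  obtain ⟨g, hg, rfl, rfl⟩ := hhom.exists_isAut_apply_eq_pair hab htype
  exact (hR g hg a b).symm

theorem exists_rel_of_rel [∀ i, Std.Irrefl (lt i)] (hhom : Ultrahomog lt)
    {R : M → M → Prop} (hR : IsInvariant lt R) {a b : M} (hab : R a b) (x : M) :
    ∃ y, R x y := by
  obtain ⟨g, hg, rfl⟩ := hhom.exists_isAut_apply_eq a x
  exact ⟨g b, (hR g hg a b).1 hab⟩

theorem exists_seq_rel [∀ i, IsStrictTotalOrder M (lt i)] (hhom : Ultrahomog lt)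
    {R : M → M → Prop} (hR : IsInvariant lt R) {x y : M} (hxy : R x y) (hne : x ≠ y) :
    ∃ s : ℕ → M, s 0 = x ∧ ∀ ⦃j k⦄, j < k → R (s j) (s k) := by
  obtain ⟨σ, hσ, rfl⟩ := hhom.exists_isAut_apply_eq x y
  exact ⟨fun k => (σ ^ k) x, rfl, fun j k hjk =>
    (hhom.rel_iff_of_sameOrderType hR hne (hσ.sameOrderType_pow_pow x hjk)).2 hxy⟩

end Ultrahomog

theorem stmt_7_general {n : ℕ} {M : Type*} (lt : Fin n → M → M → Prop)
    (hlt : ∀ i, IsStrictTotalOrder M (lt i))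
    (hhom : Ultrahomog lt)
    (E F : M → M → Prop) (hFe : Equivalence F)
    (hEinv : ∀ g : M ≃ M, (∀ x y i, lt i x y ↔ lt i (g x) (g y)) →
      ∀ x y, E x y ↔ E (g x) (g y))
    (hFinv : ∀ g : M ≃ M, (∀ x y i, lt i x y ↔ lt i (g x) (g y)) →
      ∀ x y, F x y ↔ F (g x) (g y))
    (hne : ¬ ∀ x y, E x y → F x y) :
    ∀ x : M, ∃ T : Set M, T.Infinite ∧ (∀ y ∈ T, E x y) ∧
      T.Pairwise fun a b => ¬ F a b := by
  intro x
  have hR : PermStructure.IsInvariant lt fun u v => E u v ∧ ¬ F u v := fun g hg u v =>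
    and_congr (hEinv g hg u v) (not_congr (hFinv g hg u v))
  push Not at hne
  obtain ⟨a, b, hab⟩ := hne
  obtain ⟨y, hxy⟩ := hhom.exists_rel_of_rel hR hab x
  obtain ⟨s, rfl, hs⟩ := hhom.exists_seq_rel hR hxy fun h => hxy.2 (h ▸ hFe.refl _)
  have : Std.Symm fun u v => ¬ F u v := ⟨fun u v h h' => h (hFe.symm h')⟩
  have hpair : Pairwise (Function.onFun (fun u v => ¬ F u v) fun k => s (k + 1)) :=
    (Std.Symm.pairwise_on _).2 fun j k hjk => (hs (Nat.succ_lt_succ hjk)).2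
  refine ⟨Set.range fun k => s (k + 1), Set.infinite_range_of_injective ?_,
    ?_, hpair.range_pairwise⟩
  · exact Function.injective_iff_pairwise_ne.2 (hpair.mono fun _ _ h h' => h (h' ▸ hFe.refl _))
  · rintro _ ⟨k, rfl⟩
    exact (hs k.succ_pos).1

/-- in an ultrahomogeneous finite-dimensional permutation
structure, if `F` is an automorphism-invariant equivalence relation strictly
contained in the automorphism-invariant equivalence relation `E`, then every
`E`-class contains infinitely many `F`-classes. -/
theorem stmt_7 {n : ℕ} (hn : 1 ≤ n) {M : Type*} (lt : Fin n → M → M → Prop)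
    (hlt : ∀ i, IsStrictTotalOrder M (lt i))
    (hhom : Ultrahomog lt)
    (E F : M → M → Prop) (hEe : Equivalence E) (hFe : Equivalence F)
    (hEinv : ∀ g : M ≃ M, (∀ x y i, lt i x y ↔ lt i (g x) (g y)) →
      ∀ x y, E x y ↔ E (g x) (g y))
    (hFinv : ∀ g : M ≃ M, (∀ x y i, lt i x y ↔ lt i (g x) (g y)) →
      ∀ x y, F x y ↔ F (g x) (g y))
    (hFE : ∀ x y, F x y → E x y) (hne : ¬ ∀ x y, E x y → F x y) :
    ∀ x : M, ∃ T : Set M, T.Infinite ∧ (∀ y ∈ T, E x y) ∧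
      T.Pairwise fun a b => ¬ F a b :=
  stmt_7_general lt hlt hhom E F hFe hEinv hFinv hne
end

section
/- Let n ≥ 1, let X be a set, let < be a strict linear order on X, and let E₁ ⊆ E₂ ⊆ … ⊆ E_{2ⁿ−1} be a chain of equivalence relations on X, each of which is <-convex: if x < y < z and Eᵢ x z, then Eᵢ x y and Eᵢ y z. Then there exist strict linear orders <₁,…,<ₙ on X such that: (i) for all x, y, x', y' with x < y and x' < y', if Eᵢ x y ↔ Eᵢ x' y' for every i ∈ {1,…,2ⁿ−1}, then x <ⱼ y ↔ x' <ⱼ y' for every j ∈ {1,…,n}; and (ii) for all x, y, x', y' with x < y and x' < y', if x <ⱼ y ↔ x' <ⱼ y' for every j ∈ {1,…,n}, then Eᵢ x y ↔ Eᵢ x' y' for every i ∈ {1,…,2ⁿ−1}. -/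
/-!
Let `m x y` be the number of relations of the chain that contain the pair `x < y`. Because the
relations are nested and convex, the pairs of a triangle `x < y < z` satisfy
`m x z = min (m x y) (m y z)`, so the long edge of every triangle shares its value of `m` with one
of its short edges. Since `m < 2ⁿ`, `m` is determined by its `n` binary digits, and the `j`-th new
order keeps `<` on the pairs whose `j`-th digit of `m` is `1` and reverses it on the others. The
triangle property is exactly what rules out cycles of length three in such a reoriented order.
-/

theorem Nat.eq_of_testBit_eq_of_lt_two_pow {a b n : ℕ} (ha : a < 2 ^ n) (hb : b < 2 ^ n)
    (h : ∀ j < n, a.testBit j = b.testBit j) : a = b := by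
  rw [← Nat.mod_eq_of_lt ha, ← Nat.mod_eq_of_lt hb]
  refine Nat.eq_of_testBit_eq fun j => ?_
  by_cases hj : j < n <;> simp [Nat.testBit_mod_two_pow, hj, h]

section FlipOrder

variable {X : Type*}

def flipOrder (lt : X → X → Prop) (c : X → X → Bool) (x y : X) : Prop :=
  lt x y ∧ c x y = true ∨ lt y x ∧ c y x = false

variable {lt : X → X → Prop} [IsStrictTotalOrder X lt] {c : X → X → Bool} {x y z : X}

theorem flipOrder_iff_of_lt (h : lt x y) : flipOrder lt c x y ↔ c x y = true := by
  simp [flipOrder, h, asymm h]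

theorem flipOrder_swap_iff_of_lt (h : lt x y) : flipOrder lt c y x ↔ c x y = false := by
  simp [flipOrder, h, asymm h]

theorem flipOrder_irrefl (x : X) : ¬ flipOrder lt c x x := by
  simp [flipOrder, irrefl_of lt x]

theorem flipOrder_total_of_ne (hne : x ≠ y) : flipOrder lt c x y ∨ flipOrder lt c y x := by
  rcases trichotomous_of lt x y with h | h | h
  · cases hc : c x y
    · exact .inr ((flipOrder_swap_iff_of_lt h).2 hc)
    · exact .inl ((flipOrder_iff_of_lt h).2 hc)
  · exact absurd h hne
  · cases hc : c y x
    · exact .inl ((flipOrder_swap_iff_of_lt h).2 hc)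
    · exact .inr ((flipOrder_iff_of_lt h).2 hc)

theorem flipOrder_asymm (h : flipOrder lt c x y) : ¬ flipOrder lt c y x := by
  rcases trichotomous_of lt x y with hxy | rfl | hyx
  · rw [flipOrder_iff_of_lt hxy] at h
    simp [flipOrder_swap_iff_of_lt hxy, h]
  · exact absurd h (flipOrder_irrefl x)
  · rw [flipOrder_swap_iff_of_lt hyx] at h
    simp [flipOrder_iff_of_lt hyx, h]

theorem not_flipOrder_cycle_of_lt_of_lt
    (hc : ∀ x y z, lt x y → lt y z → c x z = c x y ∨ c x z = c y z)
    (hxy : lt x y) (hxz : lt x z) (h₁ : flipOrder lt c x y)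
    (h₂ : flipOrder lt c y z) (h₃ : flipOrder lt c z x) : False := by
  rw [flipOrder_iff_of_lt hxy] at h₁
  rw [flipOrder_swap_iff_of_lt hxz] at h₃
  rcases trichotomous_of lt y z with hyz | rfl | hzy
  · rw [flipOrder_iff_of_lt hyz] at h₂
    simpa [h₁, h₂, h₃] using hc x y z hxy hyz
  · exact flipOrder_irrefl y h₂
  · rw [flipOrder_swap_iff_of_lt hzy] at h₂
    simpa [h₁, h₂, h₃] using hc x z y hxz hzy

theorem not_flipOrder_cycle (hc : ∀ x y z, lt x y → lt y z → c x z = c x y ∨ c x z = c y z)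
    (h₁ : flipOrder lt c x y) (h₂ : flipOrder lt c y z)
    (h₃ : flipOrder lt c z x) : False := by
  -- rotate the cycle so that its `lt`-least element comes first
  rcases trichotomous_of lt x y with hxy | rfl | hyx
  · rcases trichotomous_of lt x z with hxz | rfl | hzx
    · exact not_flipOrder_cycle_of_lt_of_lt hc hxy hxz h₁ h₂ h₃
    · exact flipOrder_irrefl x h₃
    · exact not_flipOrder_cycle_of_lt_of_lt hc hzx (trans_of lt hzx hxy) h₃ h₁ h₂
  · exact flipOrder_irrefl x h₁
  · rcases trichotomous_of lt y z with hyz | rfl | hzy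
    · exact not_flipOrder_cycle_of_lt_of_lt hc hyz hyx h₂ h₃ h₁
    · exact flipOrder_irrefl y h₂
    · exact not_flipOrder_cycle_of_lt_of_lt hc (trans_of lt hzy hyx) hzy h₃ h₁ h₂

theorem isStrictTotalOrder_flipOrder
    (hc : ∀ x y z, lt x y → lt y z → c x z = c x y ∨ c x z = c y z) :
    IsStrictTotalOrder X (flipOrder lt c) where
  irrefl := flipOrder_irrefl
  trans x y z h₁ h₂ := by
    by_cases hxz : x = z
    · exact absurd h₂ (hxz ▸ flipOrder_asymm h₁)
    · exact (flipOrder_total_of_ne hxz).resolve_right (not_flipOrder_cycle hc h₁ h₂)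
  trichotomous x y h₁ h₂ := by
    by_contra hne
    exact (flipOrder_total_of_ne hne).elim h₁ h₂

end FlipOrder

section ConvexChain

variable {ι X : Type*} [Fintype ι]

open Classical in
noncomputable def chainLevels (E : ι → X → X → Prop) (x y : X) : Finset ι := {i | E i x y}

variable {E : ι → X → X → Prop} {x y x' y' : X}

@[simp]
theorem mem_chainLevels {i : ι} : i ∈ chainLevels E x y ↔ E i x y := by
  classical
  simp [chainLevels]

variable [LinearOrder ι]

theorem isUpperSet_chainLevels (hE : Monotone E) (x y : X) :
    IsUpperSet (chainLevels E x y : Set ι) :=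
  fun _ _ hij hi => mem_chainLevels.2 (hE hij x y (mem_chainLevels.1 hi))

theorem chainLevels_eq_of_card_eq (hE : Monotone E)
    (h : (chainLevels E x y).card = (chainLevels E x' y').card) :
    chainLevels E x y = chainLevels E x' y' := by
  rcases (isUpperSet_chainLevels hE x y).total (isUpperSet_chainLevels hE x' y') with hs | hs
  · exact Finset.eq_of_subset_of_card_le (Finset.coe_subset.1 hs) h.ge
  · exact (Finset.eq_of_subset_of_card_le (Finset.coe_subset.1 hs) h.le).symm

theorem chainLevels_eq_inter {lt : X → X → Prop} (hEq : ∀ i, Equivalence (E i))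
    (hconv : ∀ i x y z, lt x y → lt y z → E i x z → E i x y ∧ E i y z) {z : X}
    (hxy : lt x y) (hyz : lt y z) :
    chainLevels E x z = chainLevels E x y ∩ chainLevels E y z := by
  ext i
  simp only [Finset.mem_inter, mem_chainLevels]
  exact ⟨hconv i x y z hxy hyz, fun h => (hEq i).trans h.1 h.2⟩

theorem card_chainLevels_eq_or {lt : X → X → Prop} (hE : Monotone E)
    (hEq : ∀ i, Equivalence (E i))
    (hconv : ∀ i x y z, lt x y → lt y z → E i x z → E i x y ∧ E i y z) {z : X}
    (hxy : lt x y) (hyz : lt y z) :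
    (chainLevels E x z).card = (chainLevels E x y).card ∨
      (chainLevels E x z).card = (chainLevels E y z).card := by
  rw [chainLevels_eq_inter hEq hconv hxy hyz]
  rcases (isUpperSet_chainLevels hE x y).total (isUpperSet_chainLevels hE y z) with hs | hs
  · exact .inl (by rw [Finset.inter_eq_left.2 (Finset.coe_subset.1 hs)])
  · exact .inr (by rw [Finset.inter_eq_right.2 (Finset.coe_subset.1 hs)])

end ConvexChain

theorem stmt_8_general {n : ℕ} {X : Type*} (lt : X → X → Prop)
    (hlt : IsStrictTotalOrder X lt)
    (E : Fin (2 ^ n - 1) → X → X → Prop)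
    (hEe : ∀ i, Equivalence (E i))
    (hchain : ∀ i j : Fin (2 ^ n - 1), i ≤ j → ∀ x y, E i x y → E j x y)
    (hconv : ∀ i x y z, lt x y → lt y z → E i x z → E i x y ∧ E i y z) :
    ∃ lt' : Fin n → X → X → Prop,
      (∀ j, IsStrictTotalOrder X (lt' j)) ∧
      -- (i) the new orders are determined on `<`-increasing pairs
      -- by the pattern of the `E i`
      (∀ x y x' y', lt x y → lt x' y' →
        (∀ i, E i x y ↔ E i x' y') → ∀ j, (lt' j x y ↔ lt' j x' y')) ∧
      -- (ii) the `E i` are determined on `<`-increasing pairs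
      -- by the pattern of the new orders
      (∀ x y x' y', lt x y → lt x' y' →
        (∀ j, lt' j x y ↔ lt' j x' y') → ∀ i, (E i x y ↔ E i x' y')) := by
  let m x y := (chainLevels E x y).card
  have hm_lt x y : m x y < 2 ^ n := by
    show (chainLevels E x y).card < 2 ^ n
    have := (chainLevels E x y).card_le_univ
    rw [Fintype.card_fin] at this
    have := n.one_le_two_pow
    omega
  refine ⟨fun j => flipOrder lt fun x y => (m x y).testBit j, fun j => ?_, ?_, ?_⟩
  · exact isStrictTotalOrder_flipOrder fun x y z hxy hyz =>
      (card_chainLevels_eq_or hchain hEe hconv hxy hyz).imp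
        (congrArg (Nat.testBit · j)) (congrArg (Nat.testBit · j))
  · intro x y x' y' hxy hxy' hE j
    have hlevels : chainLevels E x y = chainLevels E x' y' := by ext i; simpa using hE i
    simp only [flipOrder_iff_of_lt hxy, flipOrder_iff_of_lt hxy', m, hlevels]
  · intro x y x' y' hxy hxy' hbits i
    have hm : m x y = m x' y' :=
      Nat.eq_of_testBit_eq_of_lt_two_pow (hm_lt x y) (hm_lt x' y') fun j hj => by
        simpa [flipOrder_iff_of_lt hxy, flipOrder_iff_of_lt hxy'] using hbits ⟨j, hj⟩
    simpa using Finset.ext_iff.1 (chainLevels_eq_of_card_eq hchain hm) i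

/-- a chain of `2^n - 1` convex equivalence relations with
respect to a linear order `<` can be encoded by `n` additional linear orders:
each new order is quantifier-free definable from the chain and `<` (i), and
each relation of the chain is quantifier-free definable from `<` and the new
orders (ii). -/
theorem stmt_8 {n : ℕ} (hn : 1 ≤ n) {X : Type*} (lt : X → X → Prop)
    (hlt : IsStrictTotalOrder X lt)
    (E : Fin (2 ^ n - 1) → X → X → Prop)
    (hEe : ∀ i, Equivalence (E i))
    (hchain : ∀ i j : Fin (2 ^ n - 1), i ≤ j → ∀ x y, E i x y → E j x y)
    (hconv : ∀ i x y z, lt x y → lt y z → E i x z → E i x y ∧ E i y z) :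
    ∃ lt' : Fin n → X → X → Prop,
      (∀ j, IsStrictTotalOrder X (lt' j)) ∧
      -- (i) the new orders are determined on `<`-increasing pairs
      -- by the pattern of the `E i`
      (∀ x y x' y', lt x y → lt x' y' →
        (∀ i, E i x y ↔ E i x' y') → ∀ j, (lt' j x y ↔ lt' j x' y')) ∧
      -- (ii) the `E i` are determined on `<`-increasing pairs
      -- by the pattern of the new orders
      (∀ x y x' y', lt x y → lt x' y' →
        (∀ j, lt' j x y ↔ lt' j x' y') → ∀ i, (E i x y ↔ E i x' y')) :=
  stmt_8_general lt hlt E hEe hchain hconv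
end

section
/- Let X be a finite set of size N equipped with k ≥ 1 strict linear orders <₁,…,<_k, let ℓ = ⌊N/2⌋, and suppose N!/(N−ℓ)! > 2^ℓ · k. Then there exists a family P of ℓ pairwise disjoint 2-element subsets of X such that for every i ∈ {1,…,k} there is a pair {a,a'} ∈ P and an element b ∈ X with a <ᵢ b <ᵢ a' or a' <ᵢ b <ᵢ a. -/
/-!
If every pair of a pairing of `ℓ` pairs is adjacent for a linear order on `N` points, the pairing
is determined by the orientation of each pair and the positions of the lower endpoints. No two
lower endpoints are consecutive, so lowering the `r`-th smallest one by `r` gives `ℓ` distinct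
positions among `N - ℓ`. Hence at most `2^ℓ · (N - ℓ)!/(N - 2ℓ)!` of the `N!/(N - 2ℓ)!` ordered
pairings are adjacent for a given order, and the inequality makes `k` times this smaller than the
total, so some pairing escapes all `k` orders.
-/

open Finset Function

namespace SeparatedPairing

section Compress

variable {ι : Type*} [Fintype ι] {g : ι → ℕ}

def rank (g : ι → ℕ) (i : ι) : ℕ := #{j | g j < g i}

def compress (g : ι → ℕ) (i : ι) : ℕ := g i - rank g i

lemma rank_le (hg : Injective g) (i : ι) : rank g i ≤ g i := by
  simpa [rank] using card_le_card_of_injOn g (t := range (g i)) (by intro j; simp) hg.injOn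

lemma compress_lt_compress (hg : Injective g) (hgap : ∀ i j, g i + 1 ≠ g j) {i j : ι}
    (hij : g i < g j) : compress g i < compress g j := by
  classical
  have hsub : ({l | g l < g i} : Finset ι) ⊆ ({l | g l < g j} : Finset ι) := by
    intro l; simp only [mem_filter, mem_univ, true_and]; omega
  have hmid : #(({l | g l < g j} : Finset ι) \ ({l | g l < g i} : Finset ι)) ≤ g j - 1 - g i := by
    refine (card_le_card_of_injOn g (fun l hl => ?_) hg.injOn).trans_eq (Nat.card_Ico _ _)
    have := hgap l j
    simp only [coe_sdiff, coe_filter, mem_univ, true_and, Set.mem_sdiff, Set.mem_ofPred_eq,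
      coe_Ico, Set.mem_Ico] at hl ⊢
    omega
  rw [card_sdiff_of_subset hsub] at hmid
  have := rank_le hg i
  have := rank_le hg j
  unfold compress rank at *
  omega

lemma compress_add_card_lt {N : ℕ} (hg : Injective g) (hN : ∀ i, g i + 1 < N) (i : ι) :
    compress g i + Fintype.card ι < N := by
  have hsplit := card_filter_add_card_filter_not (s := univ) (fun j => g j < g i)
  have hup : #({j | ¬ g j < g i} : Finset ι) ≤ N - 1 - g i := by
    refine (card_le_card_of_injOn g (fun j hj => ?_) hg.injOn).trans_eq (Nat.card_Ico _ _)
    have := hN j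
    simp only [coe_filter, mem_univ, true_and, Set.mem_ofPred_eq, coe_Ico, Set.mem_Ico] at hj ⊢
    omega
  have := rank_le hg i
  have := hN i
  rw [card_univ] at hsplit
  unfold compress rank at *
  omega

lemma compress_lt_compress_iff (hg : Injective g) (hgap : ∀ i j, g i + 1 ≠ g j) {i j : ι} :
    compress g i < compress g j ↔ g i < g j := by
  refine ⟨fun h => ?_, compress_lt_compress hg hgap⟩
  rcases lt_trichotomy (g i) (g j) with hij | hij | hij
  · exact hij
  · exact absurd h (by rw [hg hij]; exact lt_irrefl _)
  · exact absurd (compress_lt_compress hg hgap hij) h.not_gt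

lemma compress_add_rank_compress (hg : Injective g) (hgap : ∀ i j, g i + 1 ≠ g j) (i : ι) :
    compress g i + rank (compress g) i = g i := by
  have hrank : rank (compress g) = rank g := by
    funext i
    simp only [rank, compress_lt_compress_iff hg hgap]
  have := rank_le hg i
  rw [hrank, compress]
  omega

lemma compress_injective (hg : Injective g) (hgap : ∀ i j, g i + 1 ≠ g j) :
    Injective (compress g) := fun i j h => by
  have hrank : rank (compress g) i = rank (compress g) j := by simp only [rank, h]
  apply hg
  rw [← compress_add_rank_compress hg hgap, h, hrank, compress_add_rank_compress hg hgap]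

end Compress

section CovBy

variable {ι α : Type*}

def IsCovByPairing [Preorder α] (f : ι × Bool → α) : Prop :=
  ∀ i, f (i, true) ⋖ f (i, false) ∨ f (i, false) ⋖ f (i, true)

variable {N : ℕ}

def lowEnd (f : ι × Bool → Fin N) (i : ι) : ℕ := min (f (i, true) : ℕ) (f (i, false))

def orient (f : ι × Bool → Fin N) (i : ι) : Bool := decide (f (i, true) < f (i, false))

variable {f : ι × Bool ↪ Fin N}

lemma val_apply_eq (hf : IsCovByPairing f) (i : ι) (b : Bool) :
    (f (i, b) : ℕ) = lowEnd f i + if orient f i = b then 0 else 1 := by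
  have := hf i
  simp only [Fin.covBy_iff, Nat.covBy_iff_add_one_eq] at this
  cases b <;> simp only [lowEnd, orient, Fin.lt_def, decide_eq_true_eq, decide_eq_false_iff_not] <;>
    split_ifs <;> omega

lemma val_apply_orient (hf : IsCovByPairing f) (i : ι) : (f (i, orient f i) : ℕ) = lowEnd f i := by
  simp [val_apply_eq hf]

lemma val_apply_not_orient (hf : IsCovByPairing f) (i : ι) :
    (f (i, !orient f i) : ℕ) = lowEnd f i + 1 := by
  simp [val_apply_eq hf]

lemma lowEnd_injective (hf : IsCovByPairing f) : Injective (lowEnd f) := fun i j h => by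
  have : f (i, orient f i) = f (j, orient f j) := Fin.ext <| by
    rw [val_apply_orient hf, val_apply_orient hf, h]
  exact congrArg Prod.fst (f.injective this)

lemma lowEnd_add_one_ne (hf : IsCovByPairing f) (i j : ι) : lowEnd f i + 1 ≠ lowEnd f j := by
  intro h
  have : f (i, !orient f i) = f (j, orient f j) := Fin.ext <| by
    rw [val_apply_not_orient hf, val_apply_orient hf, h]
  obtain ⟨rfl, h⟩ := Prod.mk.inj (f.injective this)
  exact Bool.not_ne_self _ h

lemma lowEnd_add_one_lt (hf : IsCovByPairing f) (i : ι) : lowEnd f i + 1 < N :=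
  val_apply_not_orient hf i ▸ (f _).isLt

variable [Fintype ι]

def encode (f : {f : ι × Bool ↪ Fin N // IsCovByPairing f}) :
    (ι → Bool) × (ι ↪ Fin (N - Fintype.card ι)) :=
  (orient f.1, ⟨fun i => ⟨compress (lowEnd f.1) i, by
      have := compress_add_card_lt (lowEnd_injective f.2) (lowEnd_add_one_lt f.2) i
      omega⟩,
    fun i j h => compress_injective (lowEnd_injective f.2) (lowEnd_add_one_ne f.2)
      (congrArg Fin.val h)⟩)

lemma encode_injective : Injective (encode (ι := ι) (N := N)) := by
  rintro ⟨f, hf⟩ ⟨f', hf'⟩ h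
  simp only [encode, Prod.mk.injEq] at h
  obtain ⟨horient, hcompress⟩ := h
  have hcompress : compress (lowEnd f) = compress (lowEnd f') :=
    funext fun i => congrArg (fun e : ι ↪ Fin _ => (e i : ℕ)) hcompress
  have hlow : lowEnd f = lowEnd f' := funext fun i => by
    rw [← compress_add_rank_compress (lowEnd_injective hf) (lowEnd_add_one_ne hf),
      ← compress_add_rank_compress (lowEnd_injective hf') (lowEnd_add_one_ne hf'), hcompress]
  exact Subtype.ext <| DFunLike.ext _ _ fun ⟨i, b⟩ => Fin.ext <| by
    rw [val_apply_eq hf, val_apply_eq hf', hlow, horient]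

lemma card_covByPairing_fin_le :
    Nat.card {f : ι × Bool ↪ Fin N // IsCovByPairing f} ≤
      2 ^ Fintype.card ι * (N - Fintype.card ι).descFactorial (Fintype.card ι) := by
  refine (Nat.card_le_card_of_injective _ encode_injective).trans_eq ?_
  simp [Nat.card_fun, Nat.card_eq_fintype_card, Fintype.card_embedding_eq]

lemma card_covByPairing_le [LinearOrder α] [Fintype α] :
    Nat.card {f : ι × Bool ↪ α // IsCovByPairing f} ≤
      2 ^ Fintype.card ι * (Fintype.card α - Fintype.card ι).descFactorial (Fintype.card ι) := by
  let e := Fintype.orderIsoFinOfCardEq α rfl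
  refine le_of_eq_of_le (Nat.card_congr (Equiv.subtypeEquiv
    (Equiv.embeddingCongr (Equiv.refl _) e.symm.toEquiv) fun f => ?_)) card_covByPairing_fin_le
  simp [IsCovByPairing, apply_covBy_apply_iff]

end CovBy

section Adjacent

variable {ι α : Type*}

def IsAdjacent (r : α → α → Prop) (a b : α) : Prop :=
  ¬ ∃ c, (r a c ∧ r c b) ∨ (r b c ∧ r c a)

lemma IsAdjacent.covBy_or_covBy [LinearOrder α] {a b : α} (h : IsAdjacent (· < ·) a b)
    (hab : a ≠ b) : a ⋖ b ∨ b ⋖ a := by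
  rcases hab.lt_or_gt with hab | hab
  · exact .inl ⟨hab, fun c hac hcb => h ⟨c, .inl ⟨hac, hcb⟩⟩⟩
  · exact .inr ⟨hab, fun c hbc hca => h ⟨c, .inr ⟨hbc, hca⟩⟩⟩

lemma card_adjacentPairing_le [Fintype ι] [Fintype α] (r : α → α → Prop)
    [IsStrictTotalOrder α r] :
    Nat.card {f : ι × Bool ↪ α // ∀ i, IsAdjacent r (f (i, true)) (f (i, false))} ≤
      2 ^ Fintype.card ι * (Fintype.card α - Fintype.card ι).descFactorial (Fintype.card ι) := by
  classical
  let := linearOrderOfSTO r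
  refine le_trans (Nat.card_le_card_of_injective
    (Subtype.impEmbedding _ (IsCovByPairing ∘ DFunLike.coe) fun f hf i =>
      (hf i).covBy_or_covBy (f.injective.ne (by simp))) (Subtype.impEmbedding _ _ _).injective)
    card_covByPairing_le

end Adjacent

lemma card_embedding_prod_bool {ι α : Type*} [Fintype ι] [Fintype α] :
    Fintype.card (ι × Bool ↪ α) = (Fintype.card α).descFactorial (Fintype.card ι) *
      (Fintype.card α - Fintype.card ι).descFactorial (Fintype.card ι) := by
  rw [Fintype.card_embedding_eq, Fintype.card_prod, Fintype.card_bool, mul_comm,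
    ← Nat.descFactorial_mul_descFactorial (Nat.le_mul_of_pos_left _ two_pos), two_mul,
    Nat.add_sub_cancel, mul_comm]

lemma exists_forall_not_of_card_le {κ α : Type*} [Fintype κ] [Fintype α] (P : κ → α → Prop)
    {B : ℕ} (hP : ∀ i, Nat.card {x // P i x} ≤ B) (hB : Fintype.card κ * B < Fintype.card α) :
    ∃ x, ∀ i, ¬ P i x := by
  by_contra! h
  choose i hi using h
  have := Nat.card_le_card_of_injective (fun x => (⟨i x, x, hi x⟩ : Σ j, {x // P j x}))
    fun x y hxy => congrArg (fun s => s.2.1) hxy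
  rw [Nat.card_sigma, Nat.card_eq_fintype_card] at this
  have := this.trans (sum_le_card_nsmul _ _ _ fun j _ => hP j)
  simp only [card_univ, smul_eq_mul] at this
  omega

end SeparatedPairing

open SeparatedPairing

theorem stmt_11_general {k N : ℕ} {X : Type*} [Fintype X]
    (hcard : Fintype.card X = N)
    (lt : Fin k → X → X → Prop) (hlt : ∀ i, IsStrictTotalOrder X (lt i))
    (hineq : 2 ^ (N / 2) * k < N.descFactorial (N / 2)) :
    ∃ p : Fin (N / 2) → X × X,
      -- the 2·ℓ points of the pairs are pairwise distinct, i.e. the pairs are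
      -- 2-element sets and pairwise disjoint
      Function.Injective (fun jb : Fin (N / 2) × Bool =>
        if jb.2 then (p jb.1).1 else (p jb.1).2) ∧
      -- separation: for each order some pair is non-adjacent
      (∀ i : Fin k, ∃ (j : Fin (N / 2)) (b : X),
        (lt i (p j).1 b ∧ lt i b (p j).2) ∨
        (lt i (p j).2 b ∧ lt i b (p j).1)) := by
  set ℓ := N / 2
  have hpos : 0 < (N - ℓ).descFactorial ℓ := Nat.descFactorial_pos.mpr (by omega)
  obtain ⟨f, hf⟩ := exists_forall_not_of_card_le
    (fun i (f : Fin ℓ × Bool ↪ X) => ∀ j, IsAdjacent (lt i) (f (j, true)) (f (j, false)))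
    (fun i => by
      have := hlt i
      simpa [hcard] using card_adjacentPairing_le (ι := Fin ℓ) (lt i))
    (by
      simp only [card_embedding_prod_bool, hcard, Fintype.card_fin]
      calc k * (2 ^ ℓ * (N - ℓ).descFactorial ℓ) = 2 ^ ℓ * k * (N - ℓ).descFactorial ℓ := by ring
        _ < _ := Nat.mul_lt_mul_of_pos_right hineq hpos)
  refine ⟨fun j => (f (j, true), f (j, false)), ?_, fun i => ?_⟩
  · convert f.injective using 1
    funext ⟨j, b⟩
    cases b <;> rfl
  · simpa only [IsAdjacent, not_forall, not_not] using hf i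

/-- existence of a separated pairing. If `|X| = N`,
`ℓ = ⌊N/2⌋`, and `N!/(N-ℓ)! > 2^ℓ · k`, then there is a family of `ℓ`
pairwise disjoint (ordered representations of) 2-element subsets of `X` such
that for every order `<ᵢ` some pair has an element strictly `<ᵢ`-between its
two points. -/
theorem stmt_11 {k N : ℕ} (hk : 1 ≤ k) {X : Type*} [Fintype X]
    (hcard : Fintype.card X = N)
    (lt : Fin k → X → X → Prop) (hlt : ∀ i, IsStrictTotalOrder X (lt i))
    (hineq : 2 ^ (N / 2) * k < N.descFactorial (N / 2)) :
    ∃ p : Fin (N / 2) → X × X,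
      -- the 2·ℓ points of the pairs are pairwise distinct, i.e. the pairs are
      -- 2-element sets and pairwise disjoint
      Function.Injective (fun jb : Fin (N / 2) × Bool =>
        if jb.2 then (p jb.1).1 else (p jb.1).2) ∧
      -- separation: for each order some pair is non-adjacent
      (∀ i : Fin k, ∃ (j : Fin (N / 2)) (b : X),
        (lt i (p j).1 b ∧ lt i b (p j).2) ∨
        (lt i (p j).2 b ∧ lt i b (p j).1)) :=
  stmt_11_general hcard lt hlt hineq
end

section
/- Let n ≥ 1, let X be a set equipped with n strict linear orders <₁,…,<ₙ, and let p, q, r ∈ Bool^n. Suppose a₁, x₁, x₂, x₃, a₂ ∈ X satisfy: pattern(a₁,x₁) = p, pattern(a₁,x₂) = p, pattern(a₁,x₃) = q, pattern(x₁,x₂) = q, pattern(x₂,x₃) = q, pattern(x₁,a₂) = q, pattern(x₂,a₂) = r, and pattern(x₃,a₂) = r. Then for every i ∈ {1,…,n}, a₁ <ᵢ a₂ holds if and only if at least two of p(i), q(i), r(i) are true. -/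
/-- The pattern (2-type) of an ordered pair of distinct points in a set with
`n` strict linear orders. -/
def Pattern {n : ℕ} {M : Type*} (lt : Fin n → M → M → Prop) (x y : M)
    (v : Fin n → Bool) : Prop :=
  x ≠ y ∧ ∀ i, lt i x y ↔ v i = true

namespace Pattern

variable {n : ℕ} {M : Type*} {lt : Fin n → M → M → Prop} {i : Fin n} {v w : Fin n → Bool}
  {x y z : M}

theorem lt_of_eq_true (h : Pattern lt x y v) (hv : v i = true) : lt i x y :=
  (h.2 i).2 hv

theorem lt_swap_of_eq_false [IsStrictTotalOrder M (lt i)] (h : Pattern lt x y v)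
    (hv : v i = false) : lt i y x := by
  rcases trichotomous_of (lt i) x y with hxy | rfl | hyx
  · simpa [hv] using (h.2 i).1 hxy
  · exact absurd rfl h.1
  · exact hyx

theorem lt_iff_of_eq [IsStrictTotalOrder M (lt i)] (hxz : Pattern lt x z v)
    (hzy : Pattern lt z y w) (hvw : v i = w i) : lt i x y ↔ v i = true := by
  cases hv : v i
  · rw [hv] at hvw
    exact iff_of_false
      (asymm (_root_.trans (hzy.lt_swap_of_eq_false hvw.symm) (hxz.lt_swap_of_eq_false hv)))
      Bool.false_ne_true
  · rw [hv] at hvw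
    exact iff_of_true
      (_root_.trans (hxz.lt_of_eq_true hv) (hzy.lt_of_eq_true hvw.symm)) rfl

end Pattern

theorem stmt_12_general {n : ℕ} {X : Type*} (lt : Fin n → X → X → Prop)
    (hlt : ∀ i, IsStrictTotalOrder X (lt i))
    (p q r : Fin n → Bool) (a₁ x₁ x₂ x₃ a₂ : X)
    (h1 : Pattern lt a₁ x₁ p) (h2 : Pattern lt a₁ x₂ p)
    (h3 : Pattern lt a₁ x₃ q) (h6 : Pattern lt x₁ a₂ q)
    (h7 : Pattern lt x₂ a₂ r) (h8 : Pattern lt x₃ a₂ r) :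
    ∀ i, lt i a₁ a₂ ↔
      ((p i = true ∧ q i = true) ∨ (p i = true ∧ r i = true) ∨
        (q i = true ∧ r i = true)) := by
  intro i
  have := hlt i
  -- whichever two of `p i`, `q i`, `r i` agree, one of `x₁`, `x₂`, `x₃` witnesses the majority
  have hpq : p i = q i → (lt i a₁ a₂ ↔ p i = true) := h1.lt_iff_of_eq h6
  have hpr : p i = r i → (lt i a₁ a₂ ↔ p i = true) := h2.lt_iff_of_eq h7
  have hqr : q i = r i → (lt i a₁ a₂ ↔ q i = true) := h3.lt_iff_of_eq h8
  revert hpq hpr hqr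
  cases p i <;> cases q i <;> cases r i <;> simp

/-- the `(p,q,r)`-majority diagram has a unique solution, given
coordinatewise by majority vote among `p`, `q`, `r`. -/
theorem stmt_12 {n : ℕ} (hn : 1 ≤ n) {X : Type*} (lt : Fin n → X → X → Prop)
    (hlt : ∀ i, IsStrictTotalOrder X (lt i))
    (p q r : Fin n → Bool) (a₁ x₁ x₂ x₃ a₂ : X)
    (h1 : Pattern lt a₁ x₁ p) (h2 : Pattern lt a₁ x₂ p)
    (h3 : Pattern lt a₁ x₃ q) (h4 : Pattern lt x₁ x₂ q)
    (h5 : Pattern lt x₂ x₃ q) (h6 : Pattern lt x₁ a₂ q)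
    (h7 : Pattern lt x₂ a₂ r) (h8 : Pattern lt x₃ a₂ r) :
    ∀ i, lt i a₁ a₂ ↔
      ((p i = true ∧ q i = true) ∨ (p i = true ∧ r i = true) ∨
        (q i = true ∧ r i = true)) :=
  stmt_12_general lt hlt p q r a₁ x₁ x₂ x₃ a₂ h1 h2 h3 h6 h7 h8
end

section
/- Let n ≥ 1 and let M be a set equipped with n strict linear orders <₁,…,<ₙ that is ultrahomogeneous and such that every finite set equipped with n strict linear orders embeds into M. Let R be a strict linear order on M that is invariant under every automorphism of M: R(x,y) ↔ R(σ x, σ y) for every bijection σ of M preserving each <ᵢ in both directions. Then there exists i ∈ {1,…,n} such that either R(x,y) ↔ x <ᵢ y for all x, y, or R(x,y) ↔ y <ᵢ x for all x, y. -/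
open Function Set

section

variable {ι M : Type*}

theorem rel_swap_iff_not {α : Type*} {r : α → α → Prop} [IsStrictTotalOrder α r] {a b : α}
    (hab : a ≠ b) : r b a ↔ ¬r a b :=
  ⟨asymm_of r, fun h => ((trichotomous_of r a b).resolve_left h).resolve_left hab⟩

def IsIntervalClosed (P : Set (Set ι)) : Prop :=
  ∀ ⦃A B C⦄, A ∈ P → B ∈ P → A ∩ B ⊆ C → C ⊆ A ∪ B → C ∈ P

namespace IsIntervalClosed

variable {P : Set (Set ι)}

theorem compl_preimage (hP : IsIntervalClosed P) : IsIntervalClosed (compl ⁻¹' P) :=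
  fun _ _ _ hA hB hABC hCAB =>
    hP hA hB (by rw [← compl_union]; exact compl_subset_compl.mpr hCAB)
      (by rw [← compl_inter]; exact compl_subset_compl.mpr hABC)

/-- `P` is an ultrafilter, and ultrafilters on a finite type are principal. -/
theorem exists_forall_mem_iff_of_univ_mem [Finite ι] (hP : IsIntervalClosed P)
    (hcompl : ∀ A, Aᶜ ∈ P ↔ A ∉ P) (huniv : univ ∈ P) : ∃ i, ∀ A, A ∈ P ↔ i ∈ A := by
  let F : Filter ι :=
    { sets := P
      univ_sets := huniv
      sets_of_superset := fun hA hAB => hP hA huniv (by simpa) (by simp)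
      inter_sets := fun hA hB => hP hA hB subset_rfl (inter_subset_left.trans subset_union_left) }
  obtain ⟨i, hi⟩ :=
    (Ultrafilter.ofComplNotMemIff F fun A => (not_congr (hcompl A)).trans not_not).eq_pure_of_finite
  exact ⟨i, fun A => Ultrafilter.ext_iff.mp hi A⟩

theorem exists_forall_mem_iff [Finite ι] (hP : IsIntervalClosed P)
    (hcompl : ∀ A, Aᶜ ∈ P ↔ A ∉ P) : ∃ i, (∀ A, A ∈ P ↔ i ∈ A) ∨ (∀ A, A ∈ P ↔ i ∉ A) := by
  by_cases huniv : univ ∈ P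
  · obtain ⟨i, hi⟩ := hP.exists_forall_mem_iff_of_univ_mem hcompl huniv
    exact ⟨i, Or.inl hi⟩
  · obtain ⟨i, hi⟩ := hP.compl_preimage.exists_forall_mem_iff_of_univ_mem
      (fun A => by simpa only [mem_preimage, compl_compl] using iff_not_comm.mp (hcompl A))
      (by simpa [← hcompl] using huniv)
    exact ⟨i, Or.inr fun A => by simpa using hi Aᶜ⟩

end IsIntervalClosed

/-- Places `1` above or below `0` according to `p`, then `2` according to `q` and `r`; the
hypotheses of `triangleHeight_spec` exclude exactly the two cyclic, unrealisable patterns. -/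
def triangleHeight (p q r : Prop) [Decidable p] [Decidable q] [Decidable r] : Fin 3 → ℤ :=
  ![0, if p then 2 else -2, if q then (if r then 3 else -1) else (if r then 1 else -3)]

theorem triangleHeight_spec {p q r : Prop} [Decidable p] [Decidable q] [Decidable r]
    (hpq : p ∧ q → r) (hr : r → p ∨ q) :
    Injective (triangleHeight p q r) ∧ (triangleHeight p q r 0 < triangleHeight p q r 1 ↔ p) ∧
      (triangleHeight p q r 1 < triangleHeight p q r 2 ↔ q) ∧
      (triangleHeight p q r 0 < triangleHeight p q r 2 ↔ r) := by
  by_cases hp : p <;> by_cases hq : q <;> by_cases hr' : r <;>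
    simp_all [triangleHeight] <;> decide

theorem injective_of_forall_rel_iff [Nonempty ι] {A : Type*} {la : ι → A → A → Prop}
    {lt : ι → M → M → Prop} [∀ i, Std.Trichotomous (la i)] [∀ i, Std.Irrefl (lt i)]
    {f : A → M} (hf : ∀ x y i, la i x y ↔ lt i (f x) (f y)) : Injective f := by
  intro a b hab
  obtain ⟨i⟩ := ‹Nonempty ι›
  refine Std.Trichotomous.trichotomous (r := la i) a b (fun h => ?_) (fun h => ?_)
  · exact irrefl_of (lt i) (f b) (hab ▸ (hf a b i).mp h)
  · exact irrefl_of (lt i) (f b) (hab ▸ (hf b a i).mp h)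

def EmbedsAll (lt : ι → M → M → Prop) (A : Type*) : Prop :=
  ∀ la : ι → A → A → Prop, (∀ i, IsStrictTotalOrder A (la i)) →
    ∃ f : A → M, ∀ x y i, la i x y ↔ lt i (f x) (f y)

def orderPattern (lt : ι → M → M → Prop) (x y : M) : Set ι := {i | lt i x y}

section orderPattern

variable {lt : ι → M → M → Prop}

theorem orderPattern_self [∀ i, Std.Irrefl (lt i)] (x : M) : orderPattern lt x x = ∅ :=
  eq_empty_of_forall_notMem fun i => irrefl_of (lt i) x

theorem orderPattern_swap [∀ i, IsStrictTotalOrder M (lt i)] {x y : M} (hxy : x ≠ y) :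
    orderPattern lt y x = (orderPattern lt x y)ᶜ :=
  ext fun _ => rel_swap_iff_not hxy

theorem EmbedsAll.exists_triangle [Nonempty ι] [∀ i, Std.Irrefl (lt i)]
    (hgen : EmbedsAll lt (Fin 3)) {A B C : Set ι} (hABC : A ∩ B ⊆ C) (hCAB : C ⊆ A ∪ B) :
    ∃ x y z, x ≠ y ∧ y ≠ z ∧ x ≠ z ∧
      orderPattern lt x y = A ∧ orderPattern lt y z = B ∧ orderPattern lt x z = C := by
  classical
  let h i := triangleHeight (i ∈ A) (i ∈ B) (i ∈ C)
  have spec (i : ι) := triangleHeight_spec (@hABC i) (@hCAB i)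
  have hla (i : ι) : IsStrictTotalOrder (Fin 3) ((· < ·) on h i) :=
    (spec i).1.isStrictTotalOrder_onFun _
  obtain ⟨f, hf⟩ := hgen _ hla
  have hinj := injective_of_forall_rel_iff hf
  refine ⟨f 0, f 1, f 2, hinj.ne (by decide), hinj.ne (by decide), hinj.ne (by decide), ?_, ?_, ?_⟩
    <;> ext i <;> simp only [orderPattern, mem_ofPred_eq, ← hf, onFun, spec, h]

end orderPattern

theorem Ultrahomog.exists_equiv_of_orderPattern_eq {n : ℕ} {lt : Fin n → M → M → Prop}
    [∀ i, IsStrictTotalOrder M (lt i)] (hhom : Ultrahomog lt) {x y x' y' : M} (hxy : x ≠ y)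
    (hxy' : x' ≠ y') (h : orderPattern lt x y = orderPattern lt x' y') :
    ∃ g : M ≃ M, (∀ a b i, lt i a b ↔ lt i (g a) (g b)) ∧ g x = x' ∧ g y = y' := by
  classical
  let f z := if z = x then x' else y'
  have hfx : f x = x' := if_pos rfl
  have hfy : f y = y' := if_neg hxy.symm
  have hf : ∀ a ∈ ({x, y} : Set M), ∀ b ∈ ({x, y} : Set M),
      orderPattern lt a b = orderPattern lt (f a) (f b) := by
    rintro a ha b hb
    simp only [mem_insert_iff, mem_singleton_iff] at ha hb
    rcases ha with rfl | rfl <;> rcases hb with rfl | rfl <;>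
      simp only [hfx, hfy, orderPattern_self, h, orderPattern_swap hxy, orderPattern_swap hxy']
  obtain ⟨g, hg, hgf⟩ :=
    hhom {x, y} (toFinite _) f fun a ha b hb i => Set.ext_iff.mp (hf a ha b hb) i
  exact ⟨g, hg, (hgf x (by simp)).trans hfx, (hgf y (by simp)).trans hfy⟩

def IsAutInvariant {n : ℕ} (lt : Fin n → M → M → Prop) (R : M → M → Prop) : Prop :=
  ∀ g : M ≃ M, (∀ x y i, lt i x y ↔ lt i (g x) (g y)) → ∀ x y, R x y ↔ R (g x) (g y)

def relPatterns (lt : ι → M → M → Prop) (R : M → M → Prop) : Set (Set ι) :=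
  {A | ∃ x y, R x y ∧ orderPattern lt x y = A}

section relPatterns

variable {n : ℕ} {lt : Fin n → M → M → Prop} {R : M → M → Prop}
  [∀ i, IsStrictTotalOrder M (lt i)]

theorem rel_iff_orderPattern_mem_relPatterns [Std.Irrefl R] (hhom : Ultrahomog lt)
    (hRinv : IsAutInvariant lt R) {x y : M} (hxy : x ≠ y) :
    R x y ↔ orderPattern lt x y ∈ relPatterns lt R := by
  refine ⟨fun h => ⟨x, y, h, rfl⟩, fun ⟨x', y', h', hpat⟩ => ?_⟩
  obtain ⟨g, hg, rfl, rfl⟩ := hhom.exists_equiv_of_orderPattern_eq (ne_of_irrefl h') hxy hpat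
  exact (hRinv g hg x' y').mp h'

variable [Nonempty (Fin n)]

theorem compl_mem_relPatterns_iff [IsStrictTotalOrder M R] (hgen : EmbedsAll lt (Fin 3))
    (hhom : Ultrahomog lt) (hRinv : IsAutInvariant lt R) (A : Set (Fin n)) :
    Aᶜ ∈ relPatterns lt R ↔ A ∉ relPatterns lt R := by
  obtain ⟨x, y, -, hxy, -, -, rfl, -, -⟩ :=
    hgen.exists_triangle (inter_subset_left (s := A) (t := A)) subset_union_left
  rw [← orderPattern_swap hxy, ← rel_iff_orderPattern_mem_relPatterns hhom hRinv hxy.symm,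
    ← rel_iff_orderPattern_mem_relPatterns hhom hRinv hxy, rel_swap_iff_not (r := R) hxy]

theorem isIntervalClosed_relPatterns [Std.Irrefl R] [IsTrans M R] (hgen : EmbedsAll lt (Fin 3))
    (hhom : Ultrahomog lt) (hRinv : IsAutInvariant lt R) :
    IsIntervalClosed (relPatterns lt R) := by
  intro A B C hA hB hABC hCAB
  obtain ⟨x, y, z, hxy, hyz, hxz, rfl, rfl, rfl⟩ := hgen.exists_triangle hABC hCAB
  rw [← rel_iff_orderPattern_mem_relPatterns hhom hRinv hxy] at hA
  rw [← rel_iff_orderPattern_mem_relPatterns hhom hRinv hyz] at hB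
  exact (rel_iff_orderPattern_mem_relPatterns hhom hRinv hxz).mp (trans_of R hA hB)

end relPatterns

end

/-- every automorphism-invariant strict linear order on the
generic `n`-dimensional permutation structure equals one of the `n` orders or
its reversal. -/
theorem stmt_14 {n : ℕ} (hn : 1 ≤ n) {M : Type*} (lt : Fin n → M → M → Prop)
    (hlt : ∀ i, IsStrictTotalOrder M (lt i))
    (hhom : Ultrahomog lt)
    -- genericity: every finite n-dimensional permutation structure embeds
    (hgen : ∀ (A : Type) [Fintype A],
      ∀ la : Fin n → A → A → Prop, (∀ i, IsStrictTotalOrder A (la i)) →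
        ∃ f : A → M, ∀ x y i, la i x y ↔ lt i (f x) (f y))
    (R : M → M → Prop) (hR : IsStrictTotalOrder M R)
    (hRinv : ∀ g : M ≃ M, (∀ x y i, lt i x y ↔ lt i (g x) (g y)) →
      ∀ x y, R x y ↔ R (g x) (g y)) :
    ∃ i, (∀ x y, R x y ↔ lt i x y) ∨ (∀ x y, R x y ↔ lt i y x) := by
  have : Nonempty (Fin n) := ⟨⟨0, hn⟩⟩
  have hpat {x y} (hxy : x ≠ y) := rel_iff_orderPattern_mem_relPatterns hhom hRinv hxy
  obtain ⟨i, hi⟩ := (isIntervalClosed_relPatterns (hgen (Fin 3)) hhom hRinv).exists_forall_mem_iff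
    (compl_mem_relPatterns_iff (hgen (Fin 3)) hhom hRinv)
  refine ⟨i, hi.imp (fun hi x y => ?_) (fun hi x y => ?_)⟩ <;> rcases eq_or_ne x y with rfl | hxy
  · exact iff_of_false (irrefl_of R x) (irrefl_of (lt i) x)
  · exact (hpat hxy).trans (hi _)
  · exact iff_of_false (irrefl_of R x) (irrefl_of (lt i) x)
  · exact ((hpat hxy).trans (hi _)).trans (rel_swap_iff_not hxy).symm
end

section
/- Let K be a class of finite 3-dimensional permutation structures closed under isomorphism and under substructure and having the amalgamation property. Let p, q ∈ Bool³ be distinct vectors differing in exactly two coordinates. Suppose p and q are each realized in K (some member of K contains a pair of distinct points with that pattern), and suppose the configuration 'p ⇒ q' is forbidden: no member of K contains points z, u, v with pattern(z,u) = p, pattern(z,v) = p, and pattern(u,v) = q. Then the configuration 'q ⇒ p' is realized: some member of K contains points z, u, v with pattern(z,u) = q, pattern(z,v) = q, and pattern(u,v) = p. -/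
/-- A finite `n`-dimensional permutation structure. -/
structure FinPermStruct (n : ℕ) where
  carrier : Type
  fin : Fintype carrier
  lt : Fin n → carrier → carrier → Prop
  strict : ∀ i, IsStrictTotalOrder carrier (lt i)

/-- An embedding of finite `n`-dimensional permutation structures. -/
def IsEmb {n : ℕ} (A B : FinPermStruct n) (f : A.carrier → B.carrier) : Prop :=
  Function.Injective f ∧ ∀ x y i, A.lt i x y ↔ B.lt i (f x) (f y)

/-- A 2-type `v` is realized in the class `K`. -/
def Realized {n : ℕ} (K : FinPermStruct n → Prop) (v : Fin n → Bool) : Prop :=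
  ∃ B, K B ∧ ∃ x y : B.carrier, Pattern B.lt x y v

/-! Amalgamate a pair `(b, y)` of pattern `q` with a pair `(c, y)` of pattern `p` over the
point `y`. On each coordinate where `p` and `q` differ, `y` lies between `b` and `c`, so the
pattern of `(b, c)` agrees with `q` there. On the one remaining coordinate it either agrees with
`q` too, and `(b, c, y)` realizes `q ⇒ p`, or it is opposite to `p`, and then the pattern of
`(c, b)` is `p`, so `(c, b, y)` would realize the forbidden `p ⇒ q`. -/

section Orders

variable {M : Type*} {r : M → M → Prop} [IsStrictTotalOrder M r]

theorem rel_iff_of_rel_iff_not_rel {b c y : M} (hb : b ≠ y) (hc : c ≠ y)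
    (h : r b y ↔ ¬ r c y) : r b c ↔ r b y := by
  by_cases hby : r b y
  · have hyc : r y c := (trichotomous_of r c y).resolve_left (h.mp hby) |>.resolve_left hc
    exact iff_of_true (_root_.trans hby hyc) hby
  · have hyb : r y b := (trichotomous_of r b y).resolve_left hby |>.resolve_left hb
    have hcb : r c b := _root_.trans (not_not.mp (mt h.mpr hby)) hyb
    exact iff_of_false (asymm hcb) hby

end Orders

section Patterns

variable {n : ℕ} {M : Type*} {lt : Fin n → M → M → Prop}

theorem Pattern.unique {x y : M} {v w : Fin n → Bool} (hv : Pattern lt x y v)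
    (hw : Pattern lt x y w) : v = w :=
  funext fun i => Bool.eq_iff_iff.mpr ((hv.2 i).symm.trans (hw.2 i))

variable [∀ i, IsStrictTotalOrder M (lt i)]

theorem Pattern.of_forall_iff_eq_false {x y : M} {v : Fin n → Bool} (hxy : x ≠ y)
    (h : ∀ i, lt i x y ↔ v i = false) : Pattern lt y x v := by
  refine ⟨hxy.symm, fun i => ⟨fun hyx => ?_, fun hv => ?_⟩⟩
  · simpa using mt (h i).mpr (asymm hyx)
  · rcases trichotomous_of (lt i) x y with hlt | rfl | hgt
    · simp [(h i).mp hlt] at hv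
    · exact absurd rfl hxy
    · exact hgt

theorem Pattern.rel_iff_of_ne {b c y : M} {p q : Fin n → Bool} (hb : Pattern lt b y q)
    (hc : Pattern lt c y p) {i : Fin n} (hi : p i ≠ q i) : lt i b c ↔ q i = true := by
  have hsep : lt i b y ↔ ¬ lt i c y := by
    rw [hb.2 i, hc.2 i]
    revert hi
    cases p i <;> cases q i <;> simp
  exact (rel_iff_of_rel_iff_not_rel hb.1 hc.1 hsep).trans (hb.2 i)

end Patterns

theorem forall_iff_or_forall_iff_not {ι : Type*} {p q : ι → Bool} {r : ι → Prop}
    (hpq : {i | p i = q i}.Subsingleton) (hr : ∀ i, p i ≠ q i → (r i ↔ q i = true)) :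
    (∀ i, r i ↔ q i = true) ∨ ∀ i, r i ↔ p i = false := by
  by_contra h
  simp only [not_or, not_forall] at h
  obtain ⟨⟨i, hi⟩, ⟨j, hj⟩⟩ := h
  have hpqi : p i = q i := by_contra fun h => hi (hr i h)
  have hpqj : p j = q j := by_contra fun h =>
    hj <| (hr j h).trans (by revert h; cases p j <;> cases q j <;> simp)
  obtain rfl : i = j := hpq hpqi hpqj
  revert hi hj
  rw [hpqi]
  cases q i <;> simp

theorem setOf_eq_subsingleton_of_card_filter_ne_eq_two {p q : Fin 3 → Bool}
    (h : (Finset.univ.filter fun i => p i ≠ q i).card = 2) : {i | p i = q i}.Subsingleton := by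
  have hcard : (Finset.univ.filter fun i => p i = q i).card = 1 := by
    have := Finset.card_filter_add_card_filter_not (s := Finset.univ) (fun i : Fin 3 => p i = q i)
    simp only [ne_eq] at h
    simp only [h, Finset.card_univ, Fintype.card_fin] at this
    omega
  intro i hi j hj
  exact Finset.card_le_one.mp hcard.le i (by simpa using hi) j (by simpa using hj)

namespace FinPermStruct

variable {n : ℕ}

def point (n : ℕ) : FinPermStruct n where
  carrier := PUnit
  fin := inferInstance
  lt _ _ _ := False
  strict _ :=
    { trichotomous := fun a b _ _ => Subsingleton.elim a b
      irrefl := fun _ h => h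
      trans := fun _ _ _ h _ => h.elim }

theorem isEmb_point (B : FinPermStruct n) (y : B.carrier) :
    IsEmb (point n) B fun _ => y :=
  ⟨fun _ _ _ => rfl, fun _ _ i => iff_of_false id (have := B.strict i; irrefl y)⟩

end FinPermStruct

theorem IsEmb.pattern {n : ℕ} {A B : FinPermStruct n} {f : A.carrier → B.carrier}
    (hf : IsEmb A B f) {x y : A.carrier} {v : Fin n → Bool} (hxy : Pattern A.lt x y v) :
    Pattern B.lt (f x) (f y) v :=
  ⟨hf.1.ne hxy.1, fun i => (hf.2 x y i).symm.trans (hxy.2 i)⟩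

section Amalgamation

variable {n : ℕ}

def IsHereditary (K : FinPermStruct n → Prop) : Prop :=
  ∀ A B, K B → (∃ f, IsEmb A B f) → K A

def HasAmalgamation (K : FinPermStruct n → Prop) : Prop :=
  ∀ (A B₁ B₂ : FinPermStruct n) (f₁ : A.carrier → B₁.carrier) (f₂ : A.carrier → B₂.carrier),
    K A → K B₁ → K B₂ → IsEmb A B₁ f₁ → IsEmb A B₂ f₂ →
    ∃ (C : FinPermStruct n) (g₁ : B₁.carrier → C.carrier) (g₂ : B₂.carrier → C.carrier),
      K C ∧ IsEmb B₁ C g₁ ∧ IsEmb B₂ C g₂ ∧ ∀ a, g₁ (f₁ a) = g₂ (f₂ a)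

theorem exists_patterns_to_common_point {K : FinPermStruct n → Prop} (hsub : IsHereditary K)
    (hap : HasAmalgamation K) {v w : Fin n → Bool} (hv : Realized K v) (hw : Realized K w) :
    ∃ C, K C ∧ ∃ b c y : C.carrier, Pattern C.lt b y v ∧ Pattern C.lt c y w := by
  obtain ⟨Bv, hBv, xv, yv, hv⟩ := hv
  obtain ⟨Bw, hBw, xw, yw, hw⟩ := hw
  have hpoint : K (.point n) := hsub _ Bv hBv ⟨_, Bv.isEmb_point yv⟩
  obtain ⟨C, g₁, g₂, hC, hg₁, hg₂, hglue⟩ :=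
    hap _ Bv Bw _ _ hpoint hBv hBw (Bv.isEmb_point yv) (Bw.isEmb_point yw)
  refine ⟨C, hC, g₁ xv, g₂ xw, g₁ yv, hg₁.pattern hv, ?_⟩
  rw [hglue PUnit.unit]
  exact hg₂.pattern hw

end Amalgamation

theorem stmt_15_general (K : FinPermStruct 3 → Prop)
    (hsub : ∀ A B, K B → (∃ f, IsEmb A B f) → K A)
    (hap : ∀ (A B₁ B₂ : FinPermStruct 3) (f₁ : A.carrier → B₁.carrier)
      (f₂ : A.carrier → B₂.carrier),
      K A → K B₁ → K B₂ → IsEmb A B₁ f₁ → IsEmb A B₂ f₂ →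
      ∃ (C : FinPermStruct 3) (g₁ : B₁.carrier → C.carrier)
        (g₂ : B₂.carrier → C.carrier),
        K C ∧ IsEmb B₁ C g₁ ∧ IsEmb B₂ C g₂ ∧ ∀ a, g₁ (f₁ a) = g₂ (f₂ a))
    (p q : Fin 3 → Bool)
    (hpq : (Finset.univ.filter fun i => p i ≠ q i).card = 2)
    (hp : Realized K p) (hq : Realized K q)
    (hforb : ¬ ∃ B, K B ∧ ∃ z u v : B.carrier,
      Pattern B.lt z u p ∧ Pattern B.lt z v p ∧ Pattern B.lt u v q) :
    ∃ B, K B ∧ ∃ z u v : B.carrier,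
      Pattern B.lt z u q ∧ Pattern B.lt z v q ∧ Pattern B.lt u v p := by
  obtain ⟨C, hC, b, c, y, hby, hcy⟩ := exists_patterns_to_common_point hsub hap hq hp
  have := C.strict
  have hbc : b ≠ c := by
    rintro rfl
    obtain ⟨i, hi⟩ : ∃ i, p i ≠ q i := by
      by_contra! h
      simp [h] at hpq
    exact hi (congrFun (hcy.unique hby) i)
  rcases forall_iff_or_forall_iff_not (setOf_eq_subsingleton_of_card_filter_ne_eq_two hpq)
      (fun i hi => hby.rel_iff_of_ne hcy hi) with hbcq | hbcp
  · exact ⟨C, hC, b, c, y, ⟨hbc, hbcq⟩, hby, hcy⟩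
  · exact (hforb ⟨C, hC, c, b, y, .of_forall_iff_eq_false hbc hbcp, hcy, hby⟩).elim

/-- in a hereditary, isomorphism-closed amalgamation class of
finite 3-dimensional permutation structures, if `p` and `q` are realized
2-types at Hamming distance 2 and the configuration `p ⇒ q` is forbidden, then
the configuration `q ⇒ p` is realized. -/
theorem stmt_15 (K : FinPermStruct 3 → Prop)
    (hiso : ∀ A B, K A →
      (∃ f : B.carrier → A.carrier, Function.Bijective f ∧ IsEmb B A f) → K B)
    (hsub : ∀ A B, K B → (∃ f, IsEmb A B f) → K A)
    (hap : ∀ (A B₁ B₂ : FinPermStruct 3) (f₁ : A.carrier → B₁.carrier)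
      (f₂ : A.carrier → B₂.carrier),
      K A → K B₁ → K B₂ → IsEmb A B₁ f₁ → IsEmb A B₂ f₂ →
      ∃ (C : FinPermStruct 3) (g₁ : B₁.carrier → C.carrier)
        (g₂ : B₂.carrier → C.carrier),
        K C ∧ IsEmb B₁ C g₁ ∧ IsEmb B₂ C g₂ ∧ ∀ a, g₁ (f₁ a) = g₂ (f₂ a))
    (p q : Fin 3 → Bool)
    (hpq : (Finset.univ.filter fun i => p i ≠ q i).card = 2)
    (hp : Realized K p) (hq : Realized K q)
    (hforb : ¬ ∃ B, K B ∧ ∃ z u v : B.carrier,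
      Pattern B.lt z u p ∧ Pattern B.lt z v p ∧ Pattern B.lt u v q) :
    ∃ B, K B ∧ ∃ z u v : B.carrier,
      Pattern B.lt z u q ∧ Pattern B.lt z v q ∧ Pattern B.lt u v p :=
  stmt_15_general K hsub hap p q hpq hp hq hforb
end

section
/- Let n ≥ 1 and let M be a set with at least two elements equipped with n strict linear orders <₁,…,<ₙ, and suppose M is ultrahomogeneous. Then the following are equivalent: (1) every finite set equipped with n strict linear orders embeds into M; (2) whenever for each i ∈ {1,…,n} a nonempty subset Iᵢ ⊆ M is chosen that is an open interval of <ᵢ — that is, of one of the forms {z : a <ᵢ z and z <ᵢ b}, {z : a <ᵢ z}, {z : z <ᵢ b} for some a, b ∈ M, or all of M — the intersection of the Iᵢ over all i is nonempty. -/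
/-- `I` is an open interval of the strict linear order `lt`. -/
def IsOpenInterval {M : Type*} (lt : M → M → Prop) (I : Set M) : Prop :=
  (∃ a b, I = {z | lt a z ∧ lt z b}) ∨ (∃ a, I = {z | lt a z}) ∨
  (∃ b, I = {z | lt z b}) ∨ I = Set.univ

/-!
(1 ⇒ 2): a nonempty open interval is cut out by its finitely many endpoints. Choose `wᵢ ∈ Iᵢ`,
let `S` be the finite set of all endpoints, and adjoin to `S` one new point placed just above
`wᵢ` in the `i`-th order. By genericity this finite structure embeds into `M`, and by
ultrahomogeneity the embedding can be moved so as to fix `S` pointwise; the image of the new point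
then lies in every `Iᵢ`.

(2 ⇒ 1): ultrahomogeneity and `|M| ≥ 2` make every order unbounded. Given `a <ᵢ b`, (2) applied
to suitable rays yields `z` with `b <ᵢ z` that lies on the same side of `a` as `b` in every other
order; the automorphism fixing `a` and sending `b` to `z` moves `g⁻¹ b` strictly between `a` and
`b`, so every order is dense. Hence finitely many cuts, one per order, are realized by a single
point of `M`, and a finite structure embeds one point at a time.
-/

open Function Set

section StrictTotalOrder

variable {α : Type*} {r : α → α → Prop} [IsStrictTotalOrder α r]

theorem rel_iff_not_rel_of_ne {x y : α} (h : x ≠ y) : r y x ↔ ¬ r x y :=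
  ⟨asymm_of r, fun hxy => ((trichotomous_of r x y).resolve_left hxy).resolve_left h⟩

theorem Set.Finite.exists_forall_not_rel {s : Set α} (hs : s.Finite) (hne : s.Nonempty) :
    ∃ m ∈ s, ∀ x ∈ s, ¬ r m x := by
  classical
  let := linearOrderOfSTO r
  obtain ⟨m, hm, hmax⟩ := exists_max_image s id hs hne
  exact ⟨m, hm, fun x hx => not_lt.2 (hmax x hx)⟩

def insertCut (r : α → α → Prop) (c : α → Prop) : Option α → Option α → Prop
  | some x, some y => r x y
  | some x, none => c x
  | none, some y => ¬ c y
  | none, none => False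

theorem isStrictTotalOrder_insertCut {c : α → Prop} (hc : ∀ x y, r x y → c y → c x) :
    IsStrictTotalOrder (Option α) (insertCut r c) where
  trichotomous
    | none, none, _, _ => rfl
    | none, some _, h₁, h₂ => absurd h₂ h₁
    | some _, none, h₁, h₂ => absurd h₁ h₂
    | some x, some y, h₁, h₂ => congrArg some (Std.Trichotomous.trichotomous x y h₁ h₂)
  irrefl
    | none => id
    | some x => irrefl_of r x
  trans
    | none, none, _, h, _ => h.elim
    | none, some _, none, h₁, h₂ => h₁ h₂
    | none, some y, some z, hy, hyz => fun hz => hy (hc y z hyz hz)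
    | some _, none, none, _, h => h.elim
    | some x, none, some z, hx, hz => by
      rcases trichotomous_of r x z with h | rfl | h
      exacts [h, (hz hx).elim, (hz (hc z x h hx)).elim]
    | some x, some y, none, hxy, hy => hc x y hxy hy
    | some _, some _, some _, hxy, hyz => trans_of r hxy hyz

/-- The hypothesis on `m` says that, over the endpoints `E`, it realizes the cut immediately
above `w`. -/
theorem IsOpenInterval.exists_finite_mem_of_cut_eq {I : Set α} (hI : IsOpenInterval r I) :
    ∃ E : Set α, E.Finite ∧ ∀ w ∈ I, ∀ m ∉ E, (∀ e ∈ E, ¬ r w e ↔ r e m) → m ∈ I := by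
  rcases hI with ⟨a, b, rfl⟩ | ⟨a, rfl⟩ | ⟨b, rfl⟩ | rfl
  · refine ⟨{a, b}, toFinite _, fun w ⟨haw, hwb⟩ m hm hcut => ⟨?_, ?_⟩⟩
    · exact (hcut a (by simp)).1 (asymm_of r haw)
    · exact (rel_iff_not_rel_of_ne (by rintro rfl; simp at hm)).2
        fun hbm => (hcut b (by simp)).2 hbm hwb
  · exact ⟨{a}, toFinite _, fun w haw m _ hcut => (hcut a rfl).1 (asymm_of r haw)⟩
  · refine ⟨{b}, toFinite _, fun w hwb m hm hcut => ?_⟩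
    exact (rel_iff_not_rel_of_ne (Ne.symm hm)).2 fun hbm => (hcut b rfl).2 hbm hwb
  · exact ⟨∅, finite_empty, fun _ _ m _ _ => mem_univ m⟩

theorem exists_isOpenInterval_between [Nonempty α] (hdense : ∀ a b, r a b → ∃ z, r a z ∧ r z b)
    (hmax : ∀ a, ∃ z, r a z) (hmin : ∀ a, ∃ z, r z a) {L U : Set α} (hL : L.Finite)
    (hU : U.Finite) (hLU : ∀ l ∈ L, ∀ u ∈ U, r l u) :
    ∃ J, IsOpenInterval r J ∧ J.Nonempty ∧ ∀ z ∈ J, (∀ l ∈ L, r l z) ∧ ∀ u ∈ U, r z u := by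
  rcases L.eq_empty_or_nonempty with rfl | hLne <;> rcases U.eq_empty_or_nonempty with rfl | hUne
  · exact ⟨univ, Or.inr (Or.inr (Or.inr rfl)), univ_nonempty, by simp⟩
  · obtain ⟨b, hb, hbmin⟩ := hU.exists_forall_not_rel (r := swap r) hUne
    exact ⟨{z | r z b}, Or.inr (Or.inr (Or.inl ⟨b, rfl⟩)), hmin b,
      fun z hz => ⟨by simp, fun u hu => trans_trichotomous_right hz (hbmin u hu)⟩⟩
  · obtain ⟨a, ha, hamax⟩ := hL.exists_forall_not_rel (r := r) hLne
    exact ⟨{z | r a z}, Or.inr (Or.inl ⟨a, rfl⟩), hmax a,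
      fun z hz => ⟨fun l hl => trans_trichotomous_left (hamax l hl) hz, by simp⟩⟩
  · obtain ⟨a, ha, hamax⟩ := hL.exists_forall_not_rel (r := r) hLne
    obtain ⟨b, hb, hbmin⟩ := hU.exists_forall_not_rel (r := swap r) hUne
    exact ⟨{z | r a z ∧ r z b}, Or.inl ⟨a, b, rfl⟩, hdense a b (hLU a ha b hb),
      fun z hz => ⟨fun l hl => trans_trichotomous_left (hamax l hl) hz.1,
        fun u hu => trans_trichotomous_right hz.2 (hbmin u hu)⟩⟩

end StrictTotalOrder

section Embedding

variable {ι A B C : Type*} {la : ι → A → A → Prop} {lb : ι → B → B → Prop}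
  {lc : ι → C → C → Prop}

def IsEmbedding (la : ι → A → A → Prop) (lb : ι → B → B → Prop) (f : A → B) : Prop :=
  ∀ x y i, la i x y ↔ lb i (f x) (f y)

def IsEmbeddingOn (la : ι → A → A → Prop) (lb : ι → B → B → Prop) (f : A → B) (s : Set A) :
    Prop :=
  ∀ x ∈ s, ∀ y ∈ s, ∀ i, la i x y ↔ lb i (f x) (f y)

theorem IsEmbedding.comp {f : A → B} {g : B → C} (hg : IsEmbedding lb lc g)
    (hf : IsEmbedding la lb f) : IsEmbedding la lc (g ∘ f) :=
  fun x y i => (hf x y i).trans (hg _ _ i)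

theorem IsEmbedding.injective [Nonempty ι] [∀ i, IsStrictTotalOrder A (la i)]
    [∀ i, Std.Irrefl (lb i)] {f : A → B} (hf : IsEmbedding la lb f) : Injective f := by
  intro x y hxy
  let i : ι := Classical.arbitrary ι
  rcases trichotomous_of (la i) x y with h | h | h
  · exact absurd ((hf x y i).1 h) (hxy ▸ irrefl_of (lb i) _)
  · exact h
  · exact absurd ((hf y x i).1 h) (hxy ▸ irrefl_of (lb i) _)

def IsGeneric (lb : ι → B → B → Prop) : Prop :=
  ∀ (A : Type) [Fintype A] (la : ι → A → A → Prop),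
    (∀ i, IsStrictTotalOrder A (la i)) → ∃ f : A → B, IsEmbedding la lb f

def IntervalsIntersect (lb : ι → B → B → Prop) : Prop :=
  ∀ I : ι → Set B, (∀ i, IsOpenInterval (lb i) (I i) ∧ (I i).Nonempty) → (⋂ i, I i).Nonempty

def HasExtensionProperty (lb : ι → B → B → Prop) : Prop :=
  ∀ L U : ι → Set B, (∀ i, (L i).Finite) → (∀ i, (U i).Finite) →
    (∀ i, ∀ l ∈ L i, ∀ u ∈ U i, lb i l u) → ∃ z, ∀ i, (∀ l ∈ L i, lb i l z) ∧ ∀ u ∈ U i, lb i z u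

theorem IsGeneric.exists_isEmbedding (hgen : IsGeneric lb) [Finite A] (la : ι → A → A → Prop)
    [∀ i, IsStrictTotalOrder A (la i)] :
    ∃ f : A → B, IsEmbedding la lb f := by
  let e := Finite.equivFin A
  obtain ⟨f, hf⟩ := hgen _ (fun i => la i on e.symm)
    fun i => e.symm.injective.isStrictTotalOrder_onFun (la i)
  exact ⟨f ∘ e, fun x y i => by simpa [onFun] using hf (e x) (e y) i⟩

theorem IsEmbeddingOn.exists_update_insert [DecidableEq A] [∀ i, IsStrictTotalOrder A (la i)]
    [∀ i, IsStrictTotalOrder B (lb i)] (hext : HasExtensionProperty lb)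
    {t : Finset A} {p : A} (hp : p ∉ t) {f : A → B} (hf : IsEmbeddingOn la lb f t) :
    ∃ z, IsEmbeddingOn la lb (update f p z) (insert p t) := by
  have hfin (q : A → Prop) : (f '' {x | x ∈ t ∧ q x}).Finite :=
    (t.finite_toSet.subset fun _ hx => hx.1).image f
  obtain ⟨z, hz⟩ := hext (fun i => f '' {x | x ∈ t ∧ la i x p})
    (fun i => f '' {x | x ∈ t ∧ la i p x}) (fun i => hfin _) (fun i => hfin _) <| by
      rintro i _ ⟨x, ⟨hx, hxp⟩, rfl⟩ _ ⟨y, ⟨hy, hpy⟩, rfl⟩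
      exact (hf x hx y hy i).1 (trans_of (la i) hxp hpy)
  have hpx {x} (hx : x ∈ t) : p ≠ x := ne_of_mem_of_not_mem hx hp |>.symm
  have hbelow {x} (hx : x ∈ t) (i) : la i x p ↔ lb i (f x) z :=
    ⟨fun h => (hz i).1 _ ⟨x, ⟨hx, h⟩, rfl⟩, fun h => (rel_iff_not_rel_of_ne (hpx hx)).2
      fun h' => asymm_of (lb i) h ((hz i).2 _ ⟨x, ⟨hx, h'⟩, rfl⟩)⟩
  have habove {x} (hx : x ∈ t) (i) : la i p x ↔ lb i z (f x) :=
    ⟨fun h => (hz i).2 _ ⟨x, ⟨hx, h⟩, rfl⟩, fun h => (rel_iff_not_rel_of_ne (hpx hx).symm).2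
      fun h' => asymm_of (lb i) h ((hz i).1 _ ⟨x, ⟨hx, h'⟩, rfl⟩)⟩
  have hupd {x} (hx : x ∈ t) : update f p z x = f x := update_of_ne (hpx hx).symm _ _
  refine ⟨z, ?_⟩
  rintro x hx y hy i
  rcases hx with rfl | hx <;> rcases hy with rfl | hy
  · exact iff_of_false (irrefl_of (la i) _) (irrefl_of (lb i) _)
  · rw [update_self, hupd hy]; exact habove hy i
  · rw [update_self, hupd hx]; exact hbelow hx i
  · rw [hupd hx, hupd hy]; exact hf x hx y hy i

theorem HasExtensionProperty.exists_isEmbedding [Nonempty B] [∀ i, IsStrictTotalOrder B (lb i)]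
    (hext : HasExtensionProperty lb) [Finite A] (la : ι → A → A → Prop)
    [∀ i, IsStrictTotalOrder A (la i)] :
    ∃ f : A → B, IsEmbedding la lb f := by
  classical
  have := Fintype.ofFinite A
  have key (t : Finset A) : ∃ f : A → B, IsEmbeddingOn la lb f t := by
    induction t using Finset.induction_on with
    | empty => exact ⟨fun _ => Classical.arbitrary B, by simp [IsEmbeddingOn]⟩
    | insert p t hp ih =>
      obtain ⟨f, hf⟩ := ih
      obtain ⟨z, hz⟩ := hf.exists_update_insert hext hp
      exact ⟨update f p z, by rwa [Finset.coe_insert]⟩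
  obtain ⟨f, hf⟩ := key Finset.univ
  exact ⟨f, fun x y i => hf x (by simp) y (by simp) i⟩

theorem IntervalsIntersect.hasExtensionProperty [Nonempty B] [∀ i, IsStrictTotalOrder B (lb i)]
    (hint : IntervalsIntersect lb) (hdense : ∀ i a b, lb i a b → ∃ z, lb i a z ∧ lb i z b)
    (hmax : ∀ i a, ∃ z, lb i a z) (hmin : ∀ i a, ∃ z, lb i z a) : HasExtensionProperty lb := by
  intro L U hL hU hLU
  choose J hJ hJne hJz using fun i =>
    exists_isOpenInterval_between (hdense i) (hmax i) (hmin i) (hL i) (hU i) (hLU i)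
  obtain ⟨z, hz⟩ := hint J fun i => ⟨hJ i, hJne i⟩
  exact ⟨z, fun i => hJz i z (mem_iInter.1 hz i)⟩

end Embedding

namespace Ultrahomog

variable {n : ℕ} {M : Type*} {lt : Fin n → M → M → Prop} [∀ i, IsStrictTotalOrder M (lt i)]

theorem exists_isEmbedding_comp_eq [NeZero n] (hhom : Ultrahomog lt) {S : Set M} [Finite S]
    {A : Type*} {la : Fin n → A → A → Prop} {f : A → M} (hf : IsEmbedding la lt f) {j : S → A}
    (hj : IsEmbedding (fun i => lt i on (↑)) la j) :
    ∃ g : A → M, IsEmbedding la lt g ∧ ∀ s, g (j s) = s := by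
  have : ∀ i, IsStrictTotalOrder S (lt i on (↑)) :=
    fun i => Subtype.val_injective.isStrictTotalOrder_onFun (lt i)
  have hfj : IsEmbedding (fun i => lt i on (↑)) lt (f ∘ j) := hf.comp hj
  have hinj := hfj.injective
  obtain ⟨σ, hσ, hσS⟩ := hhom (range (f ∘ j)) (finite_range _) (extend (f ∘ j) (↑) id) <| by
    rintro _ ⟨s, rfl⟩ _ ⟨t, rfl⟩ i
    rw [hinj.extend_apply, hinj.extend_apply]
    exact (hfj s t i).symm
  exact ⟨σ ∘ f, IsEmbedding.comp (g := σ) hσ hf,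
    fun s => (hσS _ (mem_range_self s)).trans (hinj.extend_apply _ _ s)⟩

theorem intervalsIntersect [NeZero n] (hhom : Ultrahomog lt) (hgen : IsGeneric lt) :
    IntervalsIntersect lt := by
  intro I hI
  choose E hEfin hE using fun i => (hI i).1.exists_finite_mem_of_cut_eq
  choose w hw using fun i => (hI i).2
  let S := ⋃ i, E i
  have : Finite S := (finite_iUnion hEfin).to_subtype
  -- the new point sits immediately above `w i` in the `i`-th order
  let la i := insertCut (lt i on ((↑) : S → M)) fun s => ¬ lt i (w i) s
  have : ∀ i, IsStrictTotalOrder (Option S) (la i) := fun i =>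
    have := Subtype.val_injective.isStrictTotalOrder_onFun (lt i) (α := S)
    isStrictTotalOrder_insertCut fun _ _ hxy hy hwx => hy (trans_of (lt i) hwx hxy)
  obtain ⟨f, hf⟩ := hgen.exists_isEmbedding la
  obtain ⟨g, hg, hgS⟩ := hhom.exists_isEmbedding_comp_eq hf (j := some) fun _ _ _ => Iff.rfl
  refine ⟨g none, mem_iInter.2 fun i => hE i (w i) (hw i) (g none) (fun he => ?_) fun e he => ?_⟩
  · exact Option.some_ne_none _ (hg.injective (hgS ⟨_, mem_iUnion_of_mem i he⟩))
  · have h := hg (some ⟨e, mem_iUnion_of_mem i he⟩) none i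
    rw [hgS] at h
    exact h

theorem exists_apply_eq (hhom : Ultrahomog lt) (a b : M) :
    ∃ g : M ≃ M, IsEmbedding lt lt g ∧ g a = b := by
  obtain ⟨g, hg, hga⟩ := hhom {a} (finite_singleton a) (fun _ => b) <| by
    rintro x rfl y rfl i
    exact iff_of_false (irrefl_of (lt i) _) (irrefl_of (lt i) _)
  exact ⟨g, hg, hga a rfl⟩

theorem exists_gt_and_exists_lt [Nontrivial M] (hhom : Ultrahomog lt) (i : Fin n) (a : M) :
    (∃ z, lt i a z) ∧ ∃ z, lt i z a := by
  obtain ⟨b, hba⟩ := exists_ne a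
  obtain ⟨g, hg, hgb⟩ := hhom.exists_apply_eq b a
  rcases trichotomous_of (lt i) a b with h | rfl | h
  · exact ⟨⟨b, h⟩, g a, hgb ▸ (hg a b i).1 h⟩
  · exact absurd rfl hba
  · exact ⟨⟨g a, hgb ▸ (hg b a i).1 h⟩, b, h⟩

theorem exists_apply_eq_and_apply_eq (hhom : Ultrahomog lt) {a b a' b' : M} (hab : a ≠ b)
    (hab' : a' ≠ b') (h : ∀ i, lt i a b ↔ lt i a' b') :
    ∃ g : M ≃ M, IsEmbedding lt lt g ∧ g a = a' ∧ g b = b' := by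
  classical
  obtain ⟨g, hg, hgab⟩ := hhom {a, b} (toFinite _) (fun x => if x = a then a' else b') <| by
    rintro x (rfl | rfl) y (rfl | rfl) i <;> simp only [if_pos, if_neg hab.symm]
    · exact iff_of_false (irrefl_of (lt i) _) (irrefl_of (lt i) _)
    · exact h i
    · rw [rel_iff_not_rel_of_ne (r := lt i) hab, rel_iff_not_rel_of_ne (r := lt i) hab', h i]
    · exact iff_of_false (irrefl_of (lt i) _) (irrefl_of (lt i) _)
  exact ⟨g, hg, by simpa using hgab a (by simp), by simpa [hab.symm] using hgab b (by simp)⟩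

theorem exists_between (hhom : Ultrahomog lt) (hint : IntervalsIntersect lt)
    (hmax : ∀ i a, ∃ z, lt i a z) {i : Fin n} {a b : M} (hab : lt i a b) :
    ∃ z, lt i a z ∧ lt i z b := by
  classical
  have hne : a ≠ b := ne_of_irrefl hab
  -- a point `z` beyond `b` in the `i`-th order, but on the same side of `a` as `b` in the others
  let side j : Set M := if lt j a b then {z | lt j a z} else {z | lt j z a}
  obtain ⟨z, hz⟩ := hint (update side i {z | lt i b z}) <| by
    intro j
    rcases eq_or_ne j i with rfl | hj
    · simp only [update_self]
      exact ⟨Or.inr (Or.inl ⟨b, rfl⟩), hmax j b⟩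
    · simp only [update_of_ne hj, side]
      split_ifs with h
      · exact ⟨Or.inr (Or.inl ⟨a, rfl⟩), b, h⟩
      · exact ⟨Or.inr (Or.inr (Or.inl ⟨a, rfl⟩)), b, (rel_iff_not_rel_of_ne hne).2 h⟩
  have hbz : lt i b z := by simpa using mem_iInter.1 hz i
  have haz : lt i a z := trans_of (lt i) hab hbz
  have hsame (j) : lt j a b ↔ lt j a z := by
    rcases eq_or_ne j i with rfl | hj
    · exact iff_of_true hab haz
    · have hzj := mem_iInter.1 hz j
      simp only [update_of_ne hj, side] at hzj
      split_ifs at hzj with h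
      · exact iff_of_true h hzj
      · exact iff_of_false h (asymm_of (lt j) hzj)
  obtain ⟨g, hg, hga, hgb⟩ := hhom.exists_apply_eq_and_apply_eq hne (ne_of_irrefl haz) hsame
  refine ⟨g.symm b, (hg a _ i).2 ?_, (hg _ b i).2 ?_⟩
  · rwa [hga, g.apply_symm_apply]
  · rwa [g.apply_symm_apply, hgb]

theorem hasExtensionProperty [Nontrivial M] (hhom : Ultrahomog lt) (hint : IntervalsIntersect lt) :
    HasExtensionProperty lt :=
  have hmax i a := (hhom.exists_gt_and_exists_lt i a).1
  hint.hasExtensionProperty (fun _ _ _ => hhom.exists_between hint hmax) hmax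
    fun i a => (hhom.exists_gt_and_exists_lt i a).2

end Ultrahomog

/-- an ultrahomogeneous `n`-dimensional permutation structure
with at least two elements is generic (every finite `n`-dimensional
permutation structure embeds into it) iff every choice of one nonempty open
interval for each of the `n` orders has nonempty intersection. -/
theorem stmt_17 {n : ℕ} (hn : 1 ≤ n) {M : Type*} (hM : ∃ x y : M, x ≠ y)
    (lt : Fin n → M → M → Prop)
    (hlt : ∀ i, IsStrictTotalOrder M (lt i))
    (hhom : Ultrahomog lt) :
    (∀ (A : Type) [Fintype A],
      ∀ la : Fin n → A → A → Prop, (∀ i, IsStrictTotalOrder A (la i)) →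
        ∃ f : A → M, ∀ x y i, la i x y ↔ lt i (f x) (f y)) ↔
    (∀ I : Fin n → Set M,
      (∀ i, IsOpenInterval (lt i) (I i) ∧ (I i).Nonempty) →
      (⋂ i, I i).Nonempty) := by
  have : NeZero n := ⟨by omega⟩
  have : Nontrivial M := let ⟨x, y, hxy⟩ := hM; ⟨x, y, hxy⟩
  exact ⟨hhom.intervalsIntersect,
    fun hint _ _ la _ => (hhom.hasExtensionProperty hint).exists_isEmbedding la⟩
end

section
/- Let n ≥ 1 and let M be a set equipped with n strict linear orders <₁,…,<ₙ that is ultrahomogeneous. Let E be an equivalence relation on M invariant under every automorphism of M, and let C and C' be two distinct E-classes. Then for every v ∈ Bool^n it is impossible that there exist a ∈ C and b' ∈ C' with pattern(a,b') = v and also a' ∈ C' and b ∈ C with pattern(a',b) = v. -/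
section StrictTotalOrder

variable {M : Type*} {r : M → M → Prop} [IsStrictTotalOrder M r] {x y z : M}

theorem rel_swap_iff_not_s19 (hxy : x ≠ y) : r y x ↔ ¬ r x y := by
  rcases trichotomous_of r x y with h | rfl | h
  · exact iff_of_false (asymm_of r h) (not_not.mpr h)
  · exact absurd rfl hxy
  · exact iff_of_true h (asymm_of r h)

theorem same_side_of_same_direction (hxy : x ≠ y) (hfwd : r x y ↔ r y z) (hbwd : r y x ↔ r z y) :
    (r x y ↔ r x z) ∧ (r y x ↔ r z x) := by
  rcases trichotomous_of r x y with h | rfl | h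
  · have hxz : r x z := trans_of r h (hfwd.mp h)
    exact ⟨iff_of_true h hxz, iff_of_false (asymm_of r h) (asymm_of r hxz)⟩
  · exact absurd rfl hxy
  · have hzx : r z x := trans_of r (hbwd.mp h) h
    exact ⟨iff_of_false (asymm_of r h) (asymm_of r hzx), iff_of_true h hzx⟩

end StrictTotalOrder

section Ultrahomogeneous

variable {n : ℕ} {M : Type*} {lt : Fin n → M → M → Prop}

def IsAutomorphism (lt : Fin n → M → M → Prop) (g : M ≃ M) : Prop :=
  ∀ x y i, lt i x y ↔ lt i (g x) (g y)

theorem Pattern.rel_swap_iff (hlt : ∀ i, IsStrictTotalOrder M (lt i)) {x y : M}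
    {v : Fin n → Bool} (h : Pattern lt x y v) (i : Fin n) : lt i y x ↔ v i = false := by
  have := hlt i
  rw [rel_swap_iff_not_s19 (r := lt i) h.1, h.2 i, Bool.not_eq_true]

theorem Ultrahomog.exists_isAutomorphism_pair (hhom : Ultrahomog lt)
    (hirr : ∀ i, Std.Irrefl (lt i)) {x y x' y' : M} (hxy : x ≠ y)
    (hfwd : ∀ i, lt i x y ↔ lt i x' y') (hbwd : ∀ i, lt i y x ↔ lt i y' x') :
    ∃ g : M ≃ M, IsAutomorphism lt g ∧ g x = x' ∧ g y = y' := by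
  classical
  obtain ⟨g, hg, hgf⟩ := hhom {x, y} (Set.toFinite _) (fun z => if z = x then x' else y') (by
    simp only [Set.mem_insert_iff, Set.mem_singleton_iff]
    rintro _ (rfl | rfl) _ (rfl | rfl) i <;> simp [hxy.symm, hfwd, hbwd, irrefl_of])
  exact ⟨g, hg, by simpa using hgf x (by simp), by simpa [hxy.symm] using hgf y (by simp)⟩

theorem Ultrahomog.exists_isAutomorphism_of_pattern (hhom : Ultrahomog lt)
    (hlt : ∀ i, IsStrictTotalOrder M (lt i)) {x y x' y' : M} {v : Fin n → Bool}
    (h : Pattern lt x y v) (h' : Pattern lt x' y' v) :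
    ∃ g : M ≃ M, IsAutomorphism lt g ∧ g x = x' ∧ g y = y' :=
  hhom.exists_isAutomorphism_pair (fun i => have := hlt i; inferInstance) h.1
    (fun i => (h.2 i).trans (h'.2 i).symm)
    (fun i => (h.rel_swap_iff hlt i).trans (h'.rel_swap_iff hlt i).symm)

theorem Ultrahomog.exists_fix_map_apply_apply (hhom : Ultrahomog lt)
    (hlt : ∀ i, IsStrictTotalOrder M (lt i)) {g : M ≃ M} (hg : IsAutomorphism lt g) {y : M}
    (hy : g y ≠ y) : ∃ h : M ≃ M, IsAutomorphism lt h ∧ h y = y ∧ h (g y) = g (g y) := by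
  have side : ∀ i, (lt i y (g y) ↔ lt i y (g (g y))) ∧ (lt i (g y) y ↔ lt i (g (g y)) y) :=
    fun i => have := hlt i; same_side_of_same_direction hy.symm (hg y (g y) i) (hg (g y) y i)
  exact hhom.exists_isAutomorphism_pair (fun i => have := hlt i; inferInstance) hy.symm
    (fun i => (side i).1) (fun i => (side i).2)

theorem Ultrahomog.rel_apply_iff_rel_apply_apply (hhom : Ultrahomog lt)
    (hlt : ∀ i, IsStrictTotalOrder M (lt i)) {R : M → M → Prop}
    (hR : ∀ h : M ≃ M, IsAutomorphism lt h → ∀ x y, R x y ↔ R (h x) (h y))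
    {g : M ≃ M} (hg : IsAutomorphism lt g) {y : M} (hy : g y ≠ y) :
    R y (g y) ↔ R y (g (g y)) := by
  obtain ⟨h, hh, hhy, hhgy⟩ := hhom.exists_fix_map_apply_apply hlt hg hy
  simpa only [hhy, hhgy] using hR h hh y (g y)

end Ultrahomogeneous

theorem stmt_19_general {n : ℕ} {M : Type*} (lt : Fin n → M → M → Prop)
    (hlt : ∀ i, IsStrictTotalOrder M (lt i))
    (hhom : Ultrahomog lt)
    (E : M → M → Prop) (hEe : Equivalence E)
    (hEinv : ∀ g : M ≃ M, (∀ x y i, lt i x y ↔ lt i (g x) (g y)) →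
      ∀ x y, E x y ↔ E (g x) (g y))
    (c c' : M) (hcc' : ¬ E c c') (v : Fin n → Bool) :
    ¬ ((∃ a b', E c a ∧ E c' b' ∧ Pattern lt a b' v) ∧
       (∃ a' b, E c' a' ∧ E c b ∧ Pattern lt a' b v)) := by
  rintro ⟨⟨a, b', hca, hc'b', hab'⟩, ⟨a', b, hc'a', hcb, ha'b⟩⟩
  obtain ⟨g, hg, hga, hgb'⟩ := hhom.exists_isAutomorphism_of_pattern hlt hab' ha'b
  have hbb' : ¬ E b' b := fun h => hcc' (hEe.trans hcb (hEe.symm (hEe.trans hc'b' h)))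
  have hb'gb : E b' (g b) := by
    have hgca' : E (g c) a' := hga ▸ (hEinv g hg c a).mp hca
    have hgcgb : E (g c) (g b) := (hEinv g hg c b).mp hcb
    exact hEe.trans (hEe.symm hc'b') (hEe.trans hc'a' (hEe.trans (hEe.symm hgca') hgcgb))
  have hgb'_ne : g b' ≠ b' := fun h => hbb' (by rw [← hgb', h]; exact hEe.refl _)
  have key := hhom.rel_apply_iff_rel_apply_apply hlt hEinv hg hgb'_ne
  rw [hgb'] at key
  exact hbb' (key.mpr hb'gb)

/-- for distinct classes `C = c/E`, `C' = c'/E` of an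
automorphism-invariant equivalence relation on an ultrahomogeneous
`n`-dimensional permutation structure, no 2-type `v` is realized both in
`C × C'` and in `C' × C`. -/
theorem stmt_19 {n : ℕ} (hn : 1 ≤ n) {M : Type*} (lt : Fin n → M → M → Prop)
    (hlt : ∀ i, IsStrictTotalOrder M (lt i))
    (hhom : Ultrahomog lt)
    (E : M → M → Prop) (hEe : Equivalence E)
    (hEinv : ∀ g : M ≃ M, (∀ x y i, lt i x y ↔ lt i (g x) (g y)) →
      ∀ x y, E x y ↔ E (g x) (g y))
    (c c' : M) (hcc' : ¬ E c c') (v : Fin n → Bool) :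
    ¬ ((∃ a b', E c a ∧ E c' b' ∧ Pattern lt a b' v) ∧
       (∃ a' b, E c' a' ∧ E c b ∧ Pattern lt a' b v)) :=
  stmt_19_general lt hlt hhom E hEe hEinv c c' hcc' v
end
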